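/- arXiv:1311.5280 — 2 statements merged into one kernel-verified Lean document; each statement's English description precedes it below -/
import Mathlib

section
/- There exists a constant C > 0 such that for every k ≥ 0 and every (u,v) ∈ [0,1]², ‖l_k(u,v) − b(u,v)‖ ≤ C·2^{−k}; in particular, the Hausdorff distance between the images l_k([0,1]²) and b([0,1]²) tends to 0 as k → ∞, i.e., the control surfaces produced by subdivision converge exponentially in Hausdorff distance to the Bézier surface. -/
noncomputable section
open Finset Filter

/-- Points of `ℝ³` with the Euclidean norm. -/
abbrev E3 : Type := EuclideanSpace ℝ (Fin 3)

/-- The Bernstein polynomial `B_i^n(t) = C(n,i) tⁱ (1-t)^(n-i)`. -/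
def bern (n i : ℕ) (t : ℝ) : ℝ := (n.choose i : ℝ) * t ^ i * (1 - t) ^ (n - i)

/-- The Bézier surface of the control net `p` with degrees `n, m`. -/
def bez (n m : ℕ) (p : ℕ → ℕ → E3) (u v : ℝ) : E3 :=
  ∑ i ∈ Finset.range (n + 1), ∑ j ∈ Finset.range (m + 1),
    (bern n i u * bern m j v) • p i j

/-- The parameter square `[0,1] × [0,1]`. -/
def unitSq : Set (ℝ × ℝ) := Set.Icc 0 1 ×ˢ Set.Icc 0 1

/-- The partial derivative `b_u` of the Bézier surface. -/
def bezU (n m : ℕ) (p : ℕ → ℕ → E3) (u v : ℝ) : E3 :=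
  deriv (fun u' => bez n m p u' v) u

/-- The partial derivative `b_v` of the Bézier surface. -/
def bezV (n m : ℕ) (p : ℕ → ℕ → E3) (u v : ℝ) : E3 :=
  deriv (fun v' => bez n m p u v') v

/-- The Bézier surface is regular: `b_u, b_v` are linearly independent on `[0,1]²`. -/
def Regular (n m : ℕ) (p : ℕ → ℕ → E3) : Prop :=
  ∀ u ∈ Set.Icc (0:ℝ) 1, ∀ v ∈ Set.Icc (0:ℝ) 1,
    LinearIndependent ℝ ![bezU n m p u v, bezV n m p u v]

/-- The triangle-wise affine control surface of a net `p` (degrees `n,m`),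
parametrized over `[0,1]²`: on the cell `[i/n,(i+1)/n] × [j/m,(j+1)/m]`, the lower
parameter triangle (with vertices `(i/n,j/m), ((i+1)/n,j/m), ((i+1)/n,(j+1)/m)`) is mapped
affinely to the triangle `p i j, p (i+1) j, p (i+1) (j+1)`, and the upper parameter triangle
(with vertices `(i/n,j/m), (i/n,(j+1)/m), ((i+1)/n,(j+1)/m)`) is mapped affinely to the
triangle `p i j, p i (j+1), p (i+1) (j+1)`. -/
def ctrlSurf (n m : ℕ) (p : ℕ → ℕ → E3) (u v : ℝ) : E3 :=
  let i : ℕ := min ⌊u * n⌋₊ (n - 1)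
  let j : ℕ := min ⌊v * m⌋₊ (m - 1)
  let s : ℝ := u * n - i
  let t : ℝ := v * m - j
  if t ≤ s then (1 - s) • p i j + (s - t) • p (i + 1) j + t • p (i + 1) (j + 1)
  else (1 - t) • p i j + (t - s) • p i (j + 1) + s • p (i + 1) (j + 1)

/-- The de Casteljau midpoint points: `dcPt q r i = b_i^r`, where `b_i^0 = q i` and
`b_i^r = (b_i^(r-1) + b_(i+1)^(r-1)) / 2`. -/
def dcPt (q : ℕ → E3) : ℕ → ℕ → E3
  | 0, i => q i
  | r + 1, i => ((2:ℝ)⁻¹) • (dcPt q r i + dcPt q r (i + 1))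

/-- One de Casteljau midpoint subdivision step on a list of `N+1` control points: for
`side = 0` the left list `(b_0^0, …, b_0^N)`, otherwise the right list
`(b_0^N, b_1^(N-1), …, b_N^0)`. -/
def dcHalf (N : ℕ) (q : ℕ → E3) (side : ℕ) (i : ℕ) : E3 :=
  if side = 0 then dcPt q i 0 else dcPt q (N - i) i

/-- One subdivision step of a control net: the de Casteljau step applied to every row
(`u`-direction) and then to every column (`v`-direction); `(a, b) ∈ {0,1}²` selects one of
the four resulting `(n+1) × (m+1)` nets (the net of the subsquare with lower-left corner
`(a/2, b/2)`). -/
def subNet (n m : ℕ) (p : ℕ → ℕ → E3) (a b : ℕ) (i j : ℕ) : E3 :=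
  dcHalf m (fun j' => dcHalf n (fun i' => p i' j') a i) b j

/-- The level-`k` nets produced by `k` iterations of subdivision: `levelNet n m p k r s` is
the control net associated to the closed dyadic subsquare
`[r/2ᵏ, (r+1)/2ᵏ] × [s/2ᵏ, (s+1)/2ᵏ]` of side `2⁻ᵏ`. -/
def levelNet (n m : ℕ) (p : ℕ → ℕ → E3) : ℕ → ℕ → ℕ → (ℕ → ℕ → E3)
  | 0, _, _ => p
  | k + 1, r, s => subNet n m (levelNet n m p k (r / 2) (s / 2)) (r % 2) (s % 2)

/-- The level-`k` control surface `l_k : [0,1]² → ℝ³`: on each closed dyadic subsquare of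
side `2⁻ᵏ` it is the triangle-wise affine control surface of the corresponding level-`k`
net, carried out over that subsquare. -/
def ctrlSurfK (n m : ℕ) (p : ℕ → ℕ → E3) (k : ℕ) (u v : ℝ) : E3 :=
  let r : ℕ := min ⌊u * 2 ^ k⌋₊ (2 ^ k - 1)
  let s : ℕ := min ⌊v * 2 ^ k⌋₊ (2 ^ k - 1)
  ctrlSurf n m (levelNet n m p k r s) (u * 2 ^ k - r) (v * 2 ^ k - s)

/-- The cross product on `ℝ³`. -/
def cross3 (x y : E3) : E3 :=
  (WithLp.equiv 2 (Fin 3 → ℝ)).symm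
    ![x 1 * y 2 - x 2 * y 1, x 2 * y 0 - x 0 * y 2, x 0 * y 1 - x 1 * y 0]

/-! ### de Casteljau formula and algebraic lemmas -/

lemma dcPt_add (q q' : ℕ → E3) (r i : ℕ) :
    dcPt (fun l => q l + q' l) r i = dcPt q r i + dcPt q' r i := by
  induction r generalizing i with
  | zero => rfl
  | succ r ih => simp [dcPt, ih, smul_add]; module

lemma dcPt_sub (q q' : ℕ → E3) (r i : ℕ) :
    dcPt (fun l => q l - q' l) r i = dcPt q r i - dcPt q' r i := by
  induction r generalizing i with
  | zero => rfl
  | succ r ih => simp [dcPt, ih, smul_sub]; module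

lemma dcPt_norm_le (q : ℕ → E3) (d : ℝ) (r i : ℕ)
    (h : ∀ l, i ≤ l → l ≤ i + r → ‖q l‖ ≤ d) : ‖dcPt q r i‖ ≤ d := by
  induction r generalizing i with
  | zero => exact h i le_rfl (by omega)
  | succ r ih =>
      have h1 : ‖dcPt q r i‖ ≤ d := ih i (fun l hl hl' => h l hl (by omega))
      have h2 : ‖dcPt q r (i+1)‖ ≤ d := ih (i+1) (fun l hl hl' => h l (by omega) (by omega))
      calc ‖dcPt q (r+1) i‖ = 2⁻¹ * ‖dcPt q r i + dcPt q r (i+1)‖ := by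
            rw [dcPt]; rw [norm_smul]; norm_num
        _ ≤ 2⁻¹ * (‖dcPt q r i‖ + ‖dcPt q r (i+1)‖) :=
            by gcongr; exact norm_add_le _ _
        _ ≤ 2⁻¹ * (d + d) := by gcongr
        _ = d := by ring

lemma dcPt_eq (q : ℕ → E3) (r i : ℕ) :
    dcPt q r i = ∑ l ∈ range (r+1), (((2:ℝ)^r)⁻¹ * (r.choose l : ℝ)) • q (i+l) := by
  induction r generalizing i with
  | zero => simp [dcPt]
  | succ r ih =>
      rw [dcPt, ih i, ih (i+1)]
      rw [Finset.sum_range_succ' (fun l => (((2:ℝ)^(r+1))⁻¹ * ((r+1).choose l : ℝ)) • q (i+l)) (r+1)]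
      have e1 : ∀ l, ((r+1).choose (l+1) : ℝ) = (r.choose l : ℝ) + (r.choose (l+1) : ℝ) := by
        intro l; rw [Nat.choose_succ_succ']; push_cast; ring
      have key : ∑ l ∈ range (r+1), (((2:ℝ)^(r+1))⁻¹ * ((r+1).choose (l+1) : ℝ)) • q (i+(l+1))
          = ∑ l ∈ range (r+1), (((2:ℝ)^(r+1))⁻¹ * (r.choose l : ℝ)) • q (i+(l+1))
            + ∑ l ∈ range (r+1), (((2:ℝ)^(r+1))⁻¹ * (r.choose (l+1) : ℝ)) • q (i+(l+1)) := by
        rw [← Finset.sum_add_distrib]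
        refine Finset.sum_congr rfl fun l _ => ?_
        rw [e1, ← add_smul]; ring_nf
      rw [key]
      have key2 : ∑ l ∈ range (r+1), (((2:ℝ)^(r+1))⁻¹ * (r.choose (l+1) : ℝ)) • q (i+(l+1))
          = ∑ l ∈ range (r+2), (((2:ℝ)^(r+1))⁻¹ * (r.choose l : ℝ)) • q (i+l)
            - (((2:ℝ)^(r+1))⁻¹ * (r.choose 0 : ℝ)) • q (i+0) := by
        rw [Finset.sum_range_succ' (fun l => (((2:ℝ)^(r+1))⁻¹ * (r.choose l : ℝ)) • q (i+l)) (r+1)]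
        abel
      rw [key2]
      rw [Finset.sum_range_succ (fun l => (((2:ℝ)^(r+1))⁻¹ * (r.choose l : ℝ)) • q (i+l)) (r+1)]
      simp only [Nat.choose_succ_self, Nat.cast_zero, mul_zero, zero_smul, add_zero,
        Nat.choose_zero_right, Nat.cast_one, mul_one]
      rw [smul_add, Finset.smul_sum, Finset.smul_sum]
      have h2 : ∀ (x : E3), (2:ℝ)⁻¹ • (((2:ℝ)^r)⁻¹ • x) = ((2:ℝ)^(r+1))⁻¹ • x := by
        intro x; rw [smul_smul]; norm_num; ring_nf
      have hc : ∀ l (x : E3), (2:ℝ)⁻¹ • ((((2:ℝ)^r)⁻¹ * (r.choose l : ℝ)) • x)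
          = (((2:ℝ)^(r+1))⁻¹ * (r.choose l : ℝ)) • x := by
        intro l x; rw [smul_smul]; congr 1; rw [pow_succ, mul_inv]; ring
      simp only [hc]
      simp only [show ∀ x, i+1+x = i+(x+1) from fun x => by omega]
      abel
lemma keyS (N l : ℕ) (u : ℝ) :
    ∑ i ∈ range (N+1), (N.choose i : ℝ) * u^i * (1-u)^(N-i) * ((2:ℝ)⁻¹)^i * (i.choose l)
      = (N.choose l : ℝ) * (u/2)^l * (1-u/2)^(N-l) := by
  by_cases hl : l ≤ N
  · have hsplit : range (N+1) = Finset.Ico 0 (N+1) := by rw [Finset.range_eq_Ico]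
    rw [hsplit, ← Finset.sum_Ico_consecutive _ (Nat.zero_le l) (by omega : l ≤ N+1)]
    have h0 : ∑ i ∈ Finset.Ico 0 l,
        (N.choose i : ℝ) * u^i * (1-u)^(N-i) * ((2:ℝ)⁻¹)^i * (i.choose l) = 0 := by
      refine Finset.sum_eq_zero fun i hi => ?_
      have : i < l := (Finset.mem_Ico.mp hi).2
      rw [Nat.choose_eq_zero_of_lt this]; push_cast; ring
    rw [h0, zero_add, Finset.sum_Ico_eq_sum_range]
    have hNl : N + 1 - l = (N - l) + 1 := by omega
    rw [hNl]
    have hrhs : ((1:ℝ) - u/2)^(N-l) = (u/2 + (1-u))^(N-l) := by ring_nf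
    rw [hrhs, add_pow]
    simp only [Finset.mul_sum]
    refine Finset.sum_congr rfl fun a ha => ?_
    have haN : a ≤ N - l := by simpa using Nat.lt_succ_iff.mp (Finset.mem_range.mp ha)
    have hch : (N.choose (l+a) : ℝ) * ((l+a).choose l) = (N.choose l : ℝ) * ((N-l).choose a) := by
      have := Nat.choose_mul (n := N) (show l ≤ l + a by omega)
      have h2 : l + a - l = a := by omega
      rw [h2] at this
      exact_mod_cast congrArg (Nat.cast : ℕ → ℝ) this
    have hsub : N - (l + a) = N - l - a := by omega
    rw [hsub]
    have hpow : u^(l+a) * ((2:ℝ)⁻¹)^(l+a) = (u/2)^l * (u/2)^a := by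
      rw [← mul_pow, ← pow_add, show u * (2:ℝ)⁻¹ = u/2 from by ring]
    calc (N.choose (l+a) : ℝ) * u^(l+a) * (1-u)^(N-l-a) * ((2:ℝ)⁻¹)^(l+a) * ((l+a).choose l)
        = ((N.choose (l+a) : ℝ) * ((l+a).choose l)) * (u^(l+a) * ((2:ℝ)⁻¹)^(l+a)) * (1-u)^(N-l-a) := by ring
      _ = ((N.choose l : ℝ) * ((N-l).choose a)) * ((u/2)^l * (u/2)^a) * (1-u)^(N-l-a) := by rw [hch, hpow]
      _ = (N.choose l : ℝ) * (u/2)^l * ((u/2)^a * (1-u)^(N-l-a) * ((N-l).choose a)) := by ring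
  · rw [Nat.choose_eq_zero_of_lt (by omega)]
    push_cast
    rw [zero_mul, zero_mul]
    refine Finset.sum_eq_zero fun i hi => ?_
    have : i < l := by have := Finset.mem_range.mp hi; omega
    rw [Nat.choose_eq_zero_of_lt this]; push_cast; ring
lemma dcPt_left_expand (N i : ℕ) (hi : i ≤ N) (q : ℕ → E3) :
    dcPt q i 0 = ∑ l ∈ range (N+1), (((2:ℝ)^i)⁻¹ * (i.choose l : ℝ)) • q l := by
  rw [dcPt_eq]
  have h1 : ∑ l ∈ range (i+1), (((2:ℝ)^i)⁻¹ * (i.choose l : ℝ)) • q (0+l)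
      = ∑ l ∈ range (i+1), (((2:ℝ)^i)⁻¹ * (i.choose l : ℝ)) • q l :=
    Finset.sum_congr rfl fun l _ => by rw [Nat.zero_add]
  rw [h1]
  refine Finset.sum_subset (Finset.range_subset_range.mpr (by omega)) fun l _ hl => ?_
  have hil : i < l := by simpa using hl
  rw [Nat.choose_eq_zero_of_lt hil]
  simp

lemma dcPt_right_expand (N i : ℕ) (hi : i ≤ N) (q : ℕ → E3) :
    dcPt q (N-i) i = ∑ j ∈ range (N+1), (((2:ℝ)^(N-i))⁻¹ * ((N-i).choose (N-j) : ℝ)) • q j := by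
  have hsum : ∑ j ∈ range (N+1), (((2:ℝ)^(N-i))⁻¹ * ((N-i).choose (N-j) : ℝ)) • q j
      = ∑ j ∈ Finset.Ico i (N+1), (((2:ℝ)^(N-i))⁻¹ * ((N-i).choose (N-j) : ℝ)) • q j := by
    rw [Finset.range_eq_Ico, ← Finset.sum_Ico_consecutive
        (fun j => (((2:ℝ)^(N-i))⁻¹ * ((N-i).choose (N-j) : ℝ)) • q j)
        (Nat.zero_le i) (by omega : i ≤ N+1)]
    have h0 : ∑ j ∈ Finset.Ico 0 i,
        (((2:ℝ)^(N-i))⁻¹ * ((N-i).choose (N-j) : ℝ)) • q j = 0 := by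
      refine Finset.sum_eq_zero fun j hj => ?_
      have hji : j < i := (Finset.mem_Ico.mp hj).2
      rw [Nat.choose_eq_zero_of_lt (by omega)]
      simp
    rw [h0, zero_add]
  rw [dcPt_eq, hsum, Finset.sum_Ico_eq_sum_range, show N+1-i = (N-i)+1 by omega]
  refine Finset.sum_congr rfl fun l hl => ?_
  have hlN : l ≤ N - i := by have := Finset.mem_range.mp hl; omega
  congr 2
  rw [show N - (i + l) = (N - i) - l by omega, Nat.choose_symm hlN]

lemma swap_smul (N : ℕ) (c : ℕ → ℕ → ℝ) (w : ℕ → ℝ) (q : ℕ → E3) :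
    ∑ i ∈ range (N+1), w i • (∑ j ∈ range (N+1), c i j • q j)
      = ∑ j ∈ range (N+1), (∑ i ∈ range (N+1), w i * c i j) • q j := by
  simp only [Finset.smul_sum, smul_smul]
  rw [Finset.sum_comm]
  simp only [Finset.sum_smul]

lemma dc_left (N : ℕ) (q : ℕ → E3) (u : ℝ) :
    ∑ i ∈ range (N+1), bern N i u • dcHalf N q 0 i
      = ∑ l ∈ range (N+1), bern N l (u/2) • q l := by
  have e : ∀ i ∈ range (N+1), bern N i u • dcHalf N q 0 i
      = bern N i u • (∑ l ∈ range (N+1), (((2:ℝ)^i)⁻¹ * (i.choose l : ℝ)) • q l) := by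
    intro i hi
    rw [dcHalf, if_pos rfl, dcPt_left_expand N i (by have := Finset.mem_range.mp hi; omega)]
  rw [Finset.sum_congr rfl e, swap_smul]
  refine Finset.sum_congr rfl fun l _ => ?_
  congr 1
  simp only [bern]
  rw [← keyS N l u]
  refine Finset.sum_congr rfl fun i _ => ?_
  rw [inv_pow]
  ring

lemma dc_right (N : ℕ) (q : ℕ → E3) (u : ℝ) :
    ∑ i ∈ range (N+1), bern N i u • dcPt q (N-i) i
      = ∑ l ∈ range (N+1), bern N l ((u+1)/2) • q l := by
  have e : ∀ i ∈ range (N+1), bern N i u • dcPt q (N-i) i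
      = bern N i u • (∑ j ∈ range (N+1), (((2:ℝ)^(N-i))⁻¹ * ((N-i).choose (N-j) : ℝ)) • q j) := by
    intro i hi
    rw [dcPt_right_expand N i (by have := Finset.mem_range.mp hi; omega)]
  rw [Finset.sum_congr rfl e, swap_smul]
  refine Finset.sum_congr rfl fun j hj => ?_
  have hjN : j ≤ N := by have := Finset.mem_range.mp hj; omega
  congr 1
  rw [← Finset.sum_range_reflect
      (fun i => bern N i u * (((2:ℝ)^(N-i))⁻¹ * ((N-i).choose (N-j) : ℝ))) (N+1)]
  have e2 : ∀ i ∈ range (N+1),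
      bern N (N+1-1-i) u * (((2:ℝ)^(N-(N+1-1-i)))⁻¹ * ((N-(N+1-1-i)).choose (N-j) : ℝ))
        = (N.choose i : ℝ) * (1-u)^i * (1-(1-u))^(N-i) * ((2:ℝ)⁻¹)^i * ((i).choose (N-j) : ℝ) := by
    intro i hi
    have hiN : i ≤ N := by have := Finset.mem_range.mp hi; omega
    simp only [bern]
    rw [show N+1-1-i = N-i by omega, show N-(N-i) = i by omega,
        Nat.choose_symm hiN, sub_sub_cancel, inv_pow]
    ring
  rw [Finset.sum_congr rfl e2, keyS N (N-j) (1-u)]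
  simp only [bern]
  rw [Nat.choose_symm hjN, show N-(N-j) = j by omega,
      show (1:ℝ)-(1-u)/2 = (u+1)/2 by ring, show (1:ℝ)-(u+1)/2 = (1-u)/2 by ring]
  ring

lemma dc_step (N : ℕ) (q : ℕ → E3) (a : ℕ) (ha : a < 2) (u : ℝ) :
    ∑ i ∈ range (N+1), bern N i u • dcHalf N q a i
      = ∑ l ∈ range (N+1), bern N l ((u+a)/2) • q l := by
  interval_cases a
  · simpa using dc_left N q u
  · have h1 : ∀ i, dcHalf N q 1 i = dcPt q (N-i) i := fun i => by
      rw [dcHalf, if_neg one_ne_zero]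
    simp only [h1]
    simpa using dc_right N q u
lemma bez_subNet (n m : ℕ) (p : ℕ → ℕ → E3) (a b : ℕ) (ha : a < 2) (hb : b < 2) (u v : ℝ) :
    bez n m (subNet n m p a b) u v = bez n m p ((u+a)/2) ((v+b)/2) := by
  simp only [bez, mul_smul, ← Finset.smul_sum]
  have step1 : ∀ i, ∑ j ∈ range (m+1), bern m j v • subNet n m p a b i j
      = ∑ j ∈ range (m+1), bern m j ((v+b)/2) • dcHalf n (fun i' => p i' j) a i := by
    intro i
    simpa [subNet] using dc_step m (fun j' => dcHalf n (fun i' => p i' j') a i) b hb v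
  simp only [step1]
  have swap : ∑ i ∈ range (n+1), bern n i u •
        ∑ j ∈ range (m+1), bern m j ((v+b)/2) • dcHalf n (fun i' => p i' j) a i
      = ∑ j ∈ range (m+1), bern m j ((v+b)/2) •
        ∑ i ∈ range (n+1), bern n i u • dcHalf n (fun i' => p i' j) a i := by
    simp only [Finset.smul_sum, smul_smul]
    rw [Finset.sum_comm]
    refine Finset.sum_congr rfl fun j _ => Finset.sum_congr rfl fun i _ => ?_
    rw [mul_comm]
  rw [swap]
  have step2 : ∀ j, ∑ i ∈ range (n+1), bern n i u • dcHalf n (fun i' => p i' j) a i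
      = ∑ i ∈ range (n+1), bern n i ((u+a)/2) • p i j := fun j =>
    dc_step n (fun i' => p i' j) a ha u
  simp only [step2]
  simp only [Finset.smul_sum, smul_smul]
  rw [Finset.sum_comm]
  refine Finset.sum_congr rfl fun i _ => Finset.sum_congr rfl fun j _ => ?_
  rw [mul_comm]

lemma bez_levelNet (n m : ℕ) (p : ℕ → ℕ → E3) (k r s : ℕ) (hr : r < 2^k) (hs : s < 2^k)
    (u v : ℝ) :
    bez n m (levelNet n m p k r s) u v = bez n m p ((u+r)/2^k) ((v+s)/2^k) := by
  induction k generalizing r s u v with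
  | zero =>
      interval_cases r
      interval_cases s
      simp [levelNet]
  | succ k ih =>
      rw [show levelNet n m p (k+1) r s
            = subNet n m (levelNet n m p k (r/2) (s/2)) (r%2) (s%2) from rfl]
      rw [bez_subNet _ _ _ _ _ (Nat.mod_lt _ two_pos) (Nat.mod_lt _ two_pos)]
      rw [ih (r/2) (s/2) (by omega) (by omega)]
      have hr2 : ((r/2 : ℕ) : ℝ) * 2 + ((r%2 : ℕ) : ℝ) = (r : ℝ) := by
        exact_mod_cast Nat.div_add_mod' r 2
      have hs2 : ((s/2 : ℕ) : ℝ) * 2 + ((s%2 : ℕ) : ℝ) = (s : ℝ) := by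
        exact_mod_cast Nat.div_add_mod' s 2
      have h2k : ((2:ℝ)^k) ≠ 0 := by positivity
      have e1 : ((u + ((r%2 : ℕ):ℝ))/2 + ((r/2 : ℕ):ℝ))/2^k = (u + (r:ℝ))/2^(k+1) := by
        rw [pow_succ]
        field_simp
        linear_combination hr2
      have e2 : ((v + ((s%2 : ℕ):ℝ))/2 + ((s/2 : ℕ):ℝ))/2^k = (v + (s:ℝ))/2^(k+1) := by
        rw [pow_succ]
        field_simp
        linear_combination hs2
      rw [e1, e2]
/-! ### Geometric bounds -/

def ndb (n m : ℕ) (q : ℕ → ℕ → E3) (d : ℝ) : Prop :=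
  (∀ i j, i < n → j ≤ m → ‖q (i+1) j - q i j‖ ≤ d) ∧
  (∀ i j, i ≤ n → j < m → ‖q i (j+1) - q i j‖ ≤ d)

lemma dcPt_shift (f : ℕ → E3) (r i : ℕ) :
    dcPt (fun l => f (l+1)) r i = dcPt f r (i+1) := by
  induction r generalizing i with
  | zero => rfl
  | succ r ih => rw [dcPt, dcPt, ih, ih]

lemma dcPt_shift_sub (f : ℕ → E3) (r i : ℕ) :
    dcPt f r (i+1) - dcPt f r i = dcPt (fun l => f (l+1) - f l) r i := by
  rw [dcPt_sub (fun l => f (l+1)) f r i, dcPt_shift]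

lemma dcHalf_sub (N : ℕ) (f g : ℕ → E3) (a i : ℕ) :
    dcHalf N (fun l => f l - g l) a i = dcHalf N f a i - dcHalf N g a i := by
  unfold dcHalf
  split_ifs <;> apply dcPt_sub

lemma dcHalf_norm_le (N : ℕ) (f : ℕ → E3) (d : ℝ) (a i : ℕ) (hi : i ≤ N)
    (hf : ∀ l, l ≤ N → ‖f l‖ ≤ d) : ‖dcHalf N f a i‖ ≤ d := by
  unfold dcHalf
  split_ifs
  · exact dcPt_norm_le f d i 0 (fun l h1 h2 => hf l (by omega))
  · exact dcPt_norm_le f d (N-i) i (fun l h1 h2 => hf l (by omega))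

lemma dcHalf_diff_norm (N : ℕ) (f : ℕ → E3) (d : ℝ) (a i : ℕ) (ha : a < 2) (hi : i < N)
    (hf : ∀ l, l < N → ‖f (l+1) - f l‖ ≤ d) :
    ‖dcHalf N f a (i+1) - dcHalf N f a i‖ ≤ d/2 := by
  have hwin : ∀ (r b : ℕ), b + r < N → ‖dcPt (fun l => f (l+1) - f l) r b‖ ≤ d :=
    fun r b hb => dcPt_norm_le _ d r b (fun l h1 h2 => hf l (by omega))
  interval_cases a
  · have h1 : dcHalf N f 0 (i+1) - dcHalf N f 0 i
        = (2:ℝ)⁻¹ • (dcPt f i 1 - dcPt f i 0) := by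
      unfold dcHalf
      rw [if_pos rfl, if_pos rfl, dcPt]
      rw [smul_sub, smul_add]
      module
    rw [h1, show dcPt f i 1 - dcPt f i 0 = dcPt (fun l => f (l+1) - f l) i 0
          from dcPt_shift_sub f i 0, norm_smul,
        show ‖(2:ℝ)⁻¹‖ = 2⁻¹ by norm_num]
    have := hwin i 0 (by omega)
    linarith
  · obtain ⟨M, hM⟩ : ∃ M, N - i = M + 1 := ⟨N - i - 1, by omega⟩
    have hM2 : N - (i+1) = M := by omega
    have h1 : dcHalf N f 1 (i+1) - dcHalf N f 1 i
        = (2:ℝ)⁻¹ • (dcPt f M (i+1) - dcPt f M i) := by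
      unfold dcHalf
      rw [if_neg one_ne_zero, if_neg one_ne_zero, hM, hM2, dcPt, smul_add]
      module
    rw [h1, dcPt_shift_sub, norm_smul, show ‖(2:ℝ)⁻¹‖ = 2⁻¹ by norm_num]
    have := hwin M i (by omega)
    linarith

lemma ndb_subNet (n m : ℕ) (q : ℕ → ℕ → E3) (d : ℝ) (a b : ℕ) (ha : a < 2) (hb : b < 2)
    (h : ndb n m q d) : ndb n m (subNet n m q a b) (d/2) := by
  constructor
  · intro i j hi hj
    have hlin : subNet n m q a b (i+1) j - subNet n m q a b i j
        = dcHalf m (fun j' => dcHalf n (fun i' => q i' j') a (i+1)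
            - dcHalf n (fun i' => q i' j') a i) b j := by
      rw [show (fun j' => dcHalf n (fun i' => q i' j') a (i+1)
            - dcHalf n (fun i' => q i' j') a i)
          = (fun j' => (fun l => dcHalf n (fun i' => q i' l) a (i+1)) j'
            - (fun l => dcHalf n (fun i' => q i' l) a i) j') from rfl,
          dcHalf_sub]
      rfl
    rw [hlin]
    exact dcHalf_norm_le m _ (d/2) b j hj (fun j' hj' =>
      dcHalf_diff_norm n (fun i' => q i' j') d a i ha hi (fun l hl => h.1 l j' hl hj'))
  · intro i j hi hj
    have hlin : subNet n m q a b i (j+1) - subNet n m q a b i j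
        = dcHalf m (fun j' => dcHalf n (fun i' => q i' j') a i) b (j+1)
          - dcHalf m (fun j' => dcHalf n (fun i' => q i' j') a i) b j := rfl
    rw [hlin]
    refine dcHalf_diff_norm m _ d b j hb hj (fun j' hj' => ?_)
    have : (fun i' => q i' (j'+1) - q i' j')
        = (fun i' => (fun l => q l (j'+1)) i' - (fun l => q l j') i') := rfl
    rw [show dcHalf n (fun i' => q i' (j'+1)) a i - dcHalf n (fun i' => q i' j') a i
        = dcHalf n (fun i' => q i' (j'+1) - q i' j') a i by rw [this, dcHalf_sub]]
    exact dcHalf_norm_le n _ d a i hi (fun i' hi' => h.2 i' j' hi' hj')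

lemma ndb_levelNet (n m : ℕ) (p : ℕ → ℕ → E3) (d : ℝ) (h : ndb n m p d) :
    ∀ k r s, r < 2^k → s < 2^k → ndb n m (levelNet n m p k r s) (d * (2:ℝ)⁻¹ ^ k) := by
  intro k
  induction k with
  | zero => intro r s hr hs; simpa [levelNet] using h
  | succ k ih =>
      intro r s hr hs
      have h1 := ndb_subNet n m (levelNet n m p k (r/2) (s/2)) (d * (2:ℝ)⁻¹ ^ k)
        (r % 2) (s % 2) (Nat.mod_lt _ two_pos) (Nat.mod_lt _ two_pos)
        (ih (r/2) (s/2) (by omega) (by omega))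
      rw [show d * (2:ℝ)⁻¹ ^ k / 2 = d * (2:ℝ)⁻¹ ^ (k+1) by rw [pow_succ]; ring] at h1
      exact h1

lemma chain (N : ℕ) (f : ℕ → E3) (d : ℝ) (hd : 0 ≤ d)
    (hf : ∀ l, l < N → ‖f (l+1) - f l‖ ≤ d) :
    ∀ b, b ≤ N → ∀ a, a ≤ b → ‖f b - f a‖ ≤ (N : ℝ) * d := by
  have key : ∀ b, b ≤ N → ∀ a, a ≤ b → ‖f b - f a‖ ≤ (b : ℝ) * d := by
    intro b
    induction b with
    | zero => intro _ a ha; interval_cases a; simp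
    | succ b ih =>
        intro hb a ha
        rcases Nat.eq_or_lt_of_le ha with rfl | hlt
        · simp only [sub_self, norm_zero]
          positivity
        · have h1 := ih (by omega) a (by omega)
          have h2 := hf b (by omega)
          have h3 : ‖f (b+1) - f a‖ ≤ ‖f (b+1) - f b‖ + ‖f b - f a‖ := by
            have := dist_triangle (f (b+1)) (f b) (f a)
            simpa [dist_eq_norm] using this
          push_cast
          linarith
  intro b hb a ha
  have := key b hb a ha
  have hbN : (b : ℝ) * d ≤ (N : ℝ) * d := by
    have : (b:ℝ) ≤ N := by exact_mod_cast hb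
    nlinarith
  linarith

lemma ndb_pair (n m : ℕ) (q : ℕ → ℕ → E3) (d : ℝ) (hd : 0 ≤ d) (h : ndb n m q d) :
    ∀ i ≤ n, ∀ j ≤ m, ∀ i' ≤ n, ∀ j' ≤ m,
      ‖q i j - q i' j'‖ ≤ ((n : ℝ) + m) * d := by
  intro i hi j hj i' hi' j' hj'
  have h1 : ‖q i j - q i' j‖ ≤ (n : ℝ) * d := by
    rcases le_total i i' with hle | hle
    · rw [norm_sub_rev]
      exact chain n (fun l => q l j) d hd (fun l hl => h.1 l j hl hj) i' hi' i hle
    · exact chain n (fun l => q l j) d hd (fun l hl => h.1 l j hl hj) i hi i' hle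
  have h2 : ‖q i' j - q i' j'‖ ≤ (m : ℝ) * d := by
    rcases le_total j j' with hle | hle
    · rw [norm_sub_rev]
      exact chain m (fun l => q i' l) d hd (fun l hl => h.2 i' l hi' hl) j' hj' j hle
    · exact chain m (fun l => q i' l) d hd (fun l hl => h.2 i' l hi' hl) j hj j' hle
  have h3 : ‖q i j - q i' j'‖ ≤ ‖q i j - q i' j‖ + ‖q i' j - q i' j'‖ := by
    have := dist_triangle (q i j) (q i' j) (q i' j')
    simpa [dist_eq_norm] using this
  calc ‖q i j - q i' j'‖ ≤ (n:ℝ)*d + (m:ℝ)*d := by linarith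
    _ = ((n:ℝ) + m) * d := by ring
lemma bern_nonneg (n i : ℕ) (u : ℝ) (hu : u ∈ Set.Icc (0:ℝ) 1) : 0 ≤ bern n i u := by
  obtain ⟨h0, h1⟩ := hu
  unfold bern
  have : (0:ℝ) ≤ 1 - u := by linarith
  positivity

lemma bern_sum (n : ℕ) (u : ℝ) : ∑ i ∈ range (n+1), bern n i u = 1 := by
  have := add_pow u (1-u) n
  simp only [add_sub_cancel, one_pow] at this
  rw [show (1:ℝ) = (u + (1-u))^n by rw [add_sub_cancel, one_pow], add_pow]
  exact Finset.sum_congr rfl fun i _ => by rw [bern]; ring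

lemma bez_dist (n m : ℕ) (q : ℕ → ℕ → E3) (u v : ℝ)
    (hu : u ∈ Set.Icc (0:ℝ) 1) (hv : v ∈ Set.Icc (0:ℝ) 1) (z : E3) (D : ℝ)
    (hD : ∀ i ≤ n, ∀ j ≤ m, ‖q i j - z‖ ≤ D) :
    ‖bez n m q u v - z‖ ≤ D := by
  have hz : ∑ i ∈ range (n+1), ∑ j ∈ range (m+1), (bern n i u * bern m j v) • z = z := by
    have : ∀ i ∈ range (n+1), ∑ j ∈ range (m+1), (bern n i u * bern m j v) • z
        = bern n i u • z := by
      intro i _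
      rw [← Finset.sum_smul, ← Finset.mul_sum, bern_sum m v, mul_one]
    rw [Finset.sum_congr rfl this, ← Finset.sum_smul, bern_sum n u, one_smul]
  have hexp : bez n m q u v - z
      = ∑ i ∈ range (n+1), ∑ j ∈ range (m+1),
          (bern n i u * bern m j v) • (q i j - z) := by
    conv_lhs => rw [bez, ← hz]
    rw [← Finset.sum_sub_distrib]
    refine Finset.sum_congr rfl fun i _ => ?_
    rw [← Finset.sum_sub_distrib]
    exact Finset.sum_congr rfl fun j _ => (smul_sub _ _ _).symm
  rw [hexp]
  calc ‖∑ i ∈ range (n+1), ∑ j ∈ range (m+1), (bern n i u * bern m j v) • (q i j - z)‖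
      ≤ ∑ i ∈ range (n+1), ‖∑ j ∈ range (m+1), (bern n i u * bern m j v) • (q i j - z)‖ :=
        norm_sum_le _ _
    _ ≤ ∑ i ∈ range (n+1), ∑ j ∈ range (m+1), (bern n i u * bern m j v) * D := by
        refine Finset.sum_le_sum fun i hi => ?_
        calc ‖∑ j ∈ range (m+1), (bern n i u * bern m j v) • (q i j - z)‖
            ≤ ∑ j ∈ range (m+1), ‖(bern n i u * bern m j v) • (q i j - z)‖ :=
              norm_sum_le _ _
          _ ≤ ∑ j ∈ range (m+1), (bern n i u * bern m j v) * D := by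
              refine Finset.sum_le_sum fun j hj => ?_
              rw [norm_smul, Real.norm_eq_abs, abs_of_nonneg
                (mul_nonneg (bern_nonneg n i u hu) (bern_nonneg m j v hv))]
              have hij := hD i (by have := Finset.mem_range.mp hi; omega)
                j (by have := Finset.mem_range.mp hj; omega)
              have := mul_nonneg (bern_nonneg n i u hu) (bern_nonneg m j v hv)
              nlinarith
    _ = D := by
        have h1 : ∀ i ∈ range (n+1), ∑ j ∈ range (m+1), bern n i u * bern m j v * D
            = bern n i u * D := by
          intro i _
          calc ∑ j ∈ range (m+1), bern n i u * bern m j v * D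
              = (bern n i u * D) * ∑ j ∈ range (m+1), bern m j v := by
                rw [Finset.mul_sum]
                exact Finset.sum_congr rfl fun j _ => by ring
            _ = bern n i u * D := by rw [bern_sum]; ring
        rw [Finset.sum_congr rfl h1, ← Finset.sum_mul, bern_sum n u, one_mul]

lemma frac_bounds (M : ℕ) (hM : 1 ≤ M) (u : ℝ) (hu : u ∈ Set.Icc (0:ℝ) 1) :
    0 ≤ u * M - (min ⌊u * M⌋₊ (M-1) : ℕ) ∧ u * M - (min ⌊u * M⌋₊ (M-1) : ℕ) ≤ 1 := by
  obtain ⟨h0, h1⟩ := hu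
  have huM : 0 ≤ u * M := by positivity
  have hfl : ((min ⌊u * M⌋₊ (M-1) : ℕ) : ℝ) ≤ u * M := by
    calc ((min ⌊u * M⌋₊ (M-1) : ℕ) : ℝ) ≤ (⌊u * M⌋₊ : ℝ) := by
          exact Nat.cast_le.mpr (min_le_left _ _)
      _ ≤ u * M := Nat.floor_le huM
  constructor
  · linarith
  · rcases le_total ⌊u * M⌋₊ (M-1) with hc | hc
    · rw [min_eq_left hc]
      have := Nat.lt_floor_add_one (u * M)
      linarith [Nat.lt_floor_add_one (u * M)]
    · rw [min_eq_right hc]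
      have hMpos : (0:ℝ) < (M:ℝ) := by exact_mod_cast (show 0 < M by omega)
      have humle : u * M ≤ M := by nlinarith
      have : ((M - 1 : ℕ) : ℝ) = (M : ℝ) - 1 := by
        rw [Nat.cast_sub hM]; norm_num
      rw [this]
      linarith

lemma ctrlSurf_dist (n m : ℕ) (hn : 1 ≤ n) (hm : 1 ≤ m) (q : ℕ → ℕ → E3) (u v : ℝ)
    (hu : u ∈ Set.Icc (0:ℝ) 1) (hv : v ∈ Set.Icc (0:ℝ) 1) (z : E3) (D : ℝ)
    (hD : ∀ i ≤ n, ∀ j ≤ m, ‖q i j - z‖ ≤ D) :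
    ‖ctrlSurf n m q u v - z‖ ≤ D := by
  obtain ⟨hs0, hs1⟩ := frac_bounds n hn u hu
  obtain ⟨ht0, ht1⟩ := frac_bounds m hm v hv
  set i : ℕ := min ⌊u * n⌋₊ (n - 1) with hidef
  set j : ℕ := min ⌊v * m⌋₊ (m - 1) with hjdef
  set s : ℝ := u * n - i with hsdef
  set t : ℝ := v * m - j with htdef
  have hin : i + 1 ≤ n := by
    have : i ≤ n - 1 := min_le_right _ _
    omega
  have hjm : j + 1 ≤ m := by
    have : j ≤ m - 1 := min_le_right _ _
    omega
  have hP00 := hD i (by omega) j (by omega)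
  have hP10 := hD (i+1) hin j (by omega)
  have hP11 := hD (i+1) hin (j+1) hjm
  have hP01 := hD i (by omega) (j+1) hjm
  have hDpos : 0 ≤ D := le_trans (norm_nonneg _) hP00
  rw [show ctrlSurf n m q u v
      = if t ≤ s then (1 - s) • q i j + (s - t) • q (i+1) j + t • q (i+1) (j+1)
        else (1 - t) • q i j + (t - s) • q i (j+1) + s • q (i+1) (j+1) from rfl]
  split_ifs with hts
  · have hexp : (1 - s) • q i j + (s - t) • q (i+1) j + t • q (i+1) (j+1) - z
        = (1 - s) • (q i j - z) + (s - t) • (q (i+1) j - z) + t • (q (i+1) (j+1) - z) := by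
      module
    rw [hexp]
    calc ‖(1 - s) • (q i j - z) + (s - t) • (q (i+1) j - z) + t • (q (i+1) (j+1) - z)‖
        ≤ ‖(1 - s) • (q i j - z) + (s - t) • (q (i+1) j - z)‖ + ‖t • (q (i+1) (j+1) - z)‖ :=
          norm_add_le _ _
      _ ≤ ‖(1 - s) • (q i j - z)‖ + ‖(s - t) • (q (i+1) j - z)‖ + ‖t • (q (i+1) (j+1) - z)‖ := by
          have := norm_add_le ((1 - s) • (q i j - z)) ((s - t) • (q (i+1) j - z))
          linarith
      _ = (1 - s) * ‖q i j - z‖ + (s - t) * ‖q (i+1) j - z‖ + t * ‖q (i+1) (j+1) - z‖ := by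
          rw [norm_smul, norm_smul, norm_smul, Real.norm_eq_abs, Real.norm_eq_abs,
            Real.norm_eq_abs, abs_of_nonneg (by linarith), abs_of_nonneg (by linarith),
            abs_of_nonneg (by linarith)]
      _ ≤ (1 - s) * D + (s - t) * D + t * D := by
          gcongr <;> linarith
      _ = D := by ring
  · push_neg at hts
    have hexp : (1 - t) • q i j + (t - s) • q i (j+1) + s • q (i+1) (j+1) - z
        = (1 - t) • (q i j - z) + (t - s) • (q i (j+1) - z) + s • (q (i+1) (j+1) - z) := by
      module
    rw [hexp]
    calc ‖(1 - t) • (q i j - z) + (t - s) • (q i (j+1) - z) + s • (q (i+1) (j+1) - z)‖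
        ≤ ‖(1 - t) • (q i j - z) + (t - s) • (q i (j+1) - z)‖ + ‖s • (q (i+1) (j+1) - z)‖ :=
          norm_add_le _ _
      _ ≤ ‖(1 - t) • (q i j - z)‖ + ‖(t - s) • (q i (j+1) - z)‖ + ‖s • (q (i+1) (j+1) - z)‖ := by
          have := norm_add_le ((1 - t) • (q i j - z)) ((t - s) • (q i (j+1) - z))
          linarith
      _ = (1 - t) * ‖q i j - z‖ + (t - s) * ‖q i (j+1) - z‖ + s * ‖q (i+1) (j+1) - z‖ := by
          rw [norm_smul, norm_smul, norm_smul, Real.norm_eq_abs, Real.norm_eq_abs,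
            Real.norm_eq_abs, abs_of_nonneg (by linarith), abs_of_nonneg (by linarith),
            abs_of_nonneg (by linarith)]
      _ ≤ (1 - t) * D + (t - s) * D + s * D := by
          gcongr <;> linarith
      _ = D := by ring
lemma pointwise_bound (n m : ℕ) (hn : 1 ≤ n) (hm : 1 ≤ m) (p : ℕ → ℕ → E3) :
    ∃ C > (0:ℝ), ∀ k : ℕ, ∀ u ∈ Set.Icc (0:ℝ) 1, ∀ v ∈ Set.Icc (0:ℝ) 1,
        ‖ctrlSurfK n m p k u v - bez n m p u v‖ ≤ C * (2:ℝ)⁻¹ ^ k := by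
  set D0 : ℝ := (∑ i ∈ range (n+1), ∑ j ∈ range (m+1),
      (‖p (i+1) j - p i j‖ + ‖p i (j+1) - p i j‖)) + 1 with hD0def
  have hD0pos : 0 < D0 := by positivity
  have hndb : ndb n m p D0 := by
    have hbound : ∀ i ≤ n, ∀ j ≤ m,
        ‖p (i+1) j - p i j‖ + ‖p i (j+1) - p i j‖ ≤ D0 - 1 := by
      intro i hi j hj
      have h1 : ‖p (i+1) j - p i j‖ + ‖p i (j+1) - p i j‖
          ≤ ∑ j' ∈ range (m+1), (‖p (i+1) j' - p i j'‖ + ‖p i (j'+1) - p i j'‖) :=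
        Finset.single_le_sum (f := fun j' => ‖p (i+1) j' - p i j'‖ + ‖p i (j'+1) - p i j'‖)
          (fun j' _ => by positivity) (Finset.mem_range.mpr (by omega))
      have h2 : ∑ j' ∈ range (m+1), (‖p (i+1) j' - p i j'‖ + ‖p i (j'+1) - p i j'‖)
          ≤ ∑ i' ∈ range (n+1), ∑ j' ∈ range (m+1),
              (‖p (i'+1) j' - p i' j'‖ + ‖p i' (j'+1) - p i' j'‖) :=
        Finset.single_le_sum
          (f := fun i' => ∑ j' ∈ range (m+1), (‖p (i'+1) j' - p i' j'‖ + ‖p i' (j'+1) - p i' j'‖))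
          (fun i' _ => Finset.sum_nonneg fun j' _ => by positivity)
          (Finset.mem_range.mpr (by omega))
      simp only [hD0def]
      linarith
    constructor
    · intro i j hi hj
      have := hbound i (by omega) j hj
      have h0 : (0:ℝ) ≤ ‖p i (j+1) - p i j‖ := norm_nonneg _
      linarith
    · intro i j hi hj
      have := hbound i hi j (by omega)
      have h0 : (0:ℝ) ≤ ‖p (i+1) j - p i j‖ := norm_nonneg _
      linarith
  refine ⟨2 * ((n:ℝ) + m) * D0, by positivity, ?_⟩
  intro k u hu v hv
  set r : ℕ := min ⌊u * 2^k⌋₊ (2^k - 1) with hrdef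
  set s : ℕ := min ⌊v * 2^k⌋₊ (2^k - 1) with hsdef
  have h2k : (1:ℕ) ≤ 2^k := Nat.one_le_two_pow
  have hrlt : r < 2^k := by
    have := min_le_right ⌊u * 2^k⌋₊ (2^k - 1); omega
  have hslt : s < 2^k := by
    have := min_le_right ⌊v * 2^k⌋₊ (2^k - 1); omega
  have hcast : ((2^k : ℕ) : ℝ) = (2:ℝ)^k := by push_cast; ring
  have hu' := frac_bounds (2^k) h2k u hu
  have hv' := frac_bounds (2^k) h2k v hv
  rw [hcast] at hu' hv'
  obtain ⟨hu'0, hu'1⟩ := hu'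
  obtain ⟨hv'0, hv'1⟩ := hv'
  have hK : ctrlSurfK n m p k u v
      = ctrlSurf n m (levelNet n m p k r s) (u * 2^k - r) (v * 2^k - s) := rfl
  have hB : bez n m p u v
      = bez n m (levelNet n m p k r s) (u * 2^k - r) (v * 2^k - s) := by
    rw [bez_levelNet n m p k r s hrlt hslt]
    have h2kne : ((2:ℝ)^k) ≠ 0 := by positivity
    rw [show (u * 2^k - (r:ℝ) + r)/2^k = u by field_simp; ring,
        show (v * 2^k - (s:ℝ) + s)/2^k = v by field_simp; ring]
  set Q := levelNet n m p k r s with hQdef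
  have hndbQ : ndb n m Q (D0 * (2:ℝ)⁻¹ ^ k) := ndb_levelNet n m p D0 hndb k r s hrlt hslt
  have hDQ : ∀ i ≤ n, ∀ j ≤ m,
      ‖Q i j - Q 0 0‖ ≤ ((n:ℝ) + m) * (D0 * (2:ℝ)⁻¹ ^ k) := fun i hi j hj =>
    ndb_pair n m Q (D0 * (2:ℝ)⁻¹ ^ k) (by positivity) hndbQ i hi j hj 0 (Nat.zero_le n) 0 (Nat.zero_le m)
  have hmemu : u * 2^k - (r:ℝ) ∈ Set.Icc (0:ℝ) 1 := Set.mem_Icc.mpr ⟨by linarith, by linarith⟩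
  have hmemv : v * 2^k - (s:ℝ) ∈ Set.Icc (0:ℝ) 1 := Set.mem_Icc.mpr ⟨by linarith, by linarith⟩
  have h1 := ctrlSurf_dist n m hn hm Q (u * 2^k - r) (v * 2^k - s) hmemu hmemv (Q 0 0)
    (((n:ℝ) + m) * (D0 * (2:ℝ)⁻¹ ^ k)) hDQ
  have h2 := bez_dist n m Q (u * 2^k - r) (v * 2^k - s) hmemu hmemv (Q 0 0)
    (((n:ℝ) + m) * (D0 * (2:ℝ)⁻¹ ^ k)) hDQ
  rw [hK, hB]
  have h3 : ‖ctrlSurf n m Q (u * 2^k - r) (v * 2^k - s)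
        - bez n m Q (u * 2^k - r) (v * 2^k - s)‖
      ≤ ‖ctrlSurf n m Q (u * 2^k - r) (v * 2^k - s) - Q 0 0‖
        + ‖bez n m Q (u * 2^k - r) (v * 2^k - s) - Q 0 0‖ := by
    have := dist_triangle (ctrlSurf n m Q (u * 2^k - r) (v * 2^k - s)) (Q 0 0)
      (bez n m Q (u * 2^k - r) (v * 2^k - s))
    simpa [dist_eq_norm, norm_sub_rev (bez n m Q _ _)] using this
  calc ‖ctrlSurf n m Q (u * 2^k - r) (v * 2^k - s)
        - bez n m Q (u * 2^k - r) (v * 2^k - s)‖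
      ≤ ((n:ℝ) + m) * (D0 * (2:ℝ)⁻¹ ^ k) + ((n:ℝ) + m) * (D0 * (2:ℝ)⁻¹ ^ k) := by linarith
    _ = 2 * ((n:ℝ) + m) * D0 * (2:ℝ)⁻¹ ^ k := by ring

/-- There is a constant `C > 0` such that for every `k` and every
`(u,v) ∈ [0,1]²`, `‖l_k(u,v) - b(u,v)‖ ≤ C · 2⁻ᵏ`; in particular the Hausdorff distance
between the images of the level-`k` control surface and of the Bézier surface tends to `0`:
subdivision converges exponentially in Hausdorff distance. -/
theorem ctrlSurf_tendsto_bezier_hausdorff (n m : ℕ) (hn : 1 ≤ n) (hm : 1 ≤ m)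
    (p : ℕ → ℕ → E3) :
    (∃ C > (0:ℝ), ∀ k : ℕ, ∀ u ∈ Set.Icc (0:ℝ) 1, ∀ v ∈ Set.Icc (0:ℝ) 1,
        ‖ctrlSurfK n m p k u v - bez n m p u v‖ ≤ C * (2:ℝ)⁻¹ ^ k) ∧
    Filter.Tendsto
      (fun k : ℕ => Metric.hausdorffDist
        ((fun q : ℝ × ℝ => ctrlSurfK n m p k q.1 q.2) '' unitSq)
        ((fun q : ℝ × ℝ => bez n m p q.1 q.2) '' unitSq))
      Filter.atTop (nhds 0) := by
  obtain ⟨C, hCpos, hC⟩ := pointwise_bound n m hn hm p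
  refine ⟨⟨C, hCpos, hC⟩, ?_⟩
  have hbound : ∀ k : ℕ, Metric.hausdorffDist
      ((fun q : ℝ × ℝ => ctrlSurfK n m p k q.1 q.2) '' unitSq)
      ((fun q : ℝ × ℝ => bez n m p q.1 q.2) '' unitSq) ≤ C * (2:ℝ)⁻¹ ^ k := by
    intro k
    apply Metric.hausdorffDist_le_of_mem_dist (by positivity)
    · rintro x ⟨q, hq, rfl⟩
      obtain ⟨hq1, hq2⟩ := Set.mem_prod.mp hq
      refine ⟨bez n m p q.1 q.2, Set.mem_image_of_mem _ hq, ?_⟩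
      rw [dist_eq_norm]
      exact hC k q.1 hq1 q.2 hq2
    · rintro y ⟨q, hq, rfl⟩
      obtain ⟨hq1, hq2⟩ := Set.mem_prod.mp hq
      refine ⟨ctrlSurfK n m p k q.1 q.2, Set.mem_image_of_mem _ hq, ?_⟩
      rw [dist_eq_norm, norm_sub_rev]
      exact hC k q.1 hq1 q.2 hq2
  refine squeeze_zero (fun k => Metric.hausdorffDist_nonneg) hbound ?_
  have h0 : Filter.Tendsto (fun k : ℕ => ((2:ℝ)⁻¹) ^ k) Filter.atTop (nhds 0) :=
    tendsto_pow_atTop_nhds_zero_of_lt_one (by norm_num) (by norm_num)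
  simpa using h0.const_mul C
end
end

section
/- Assume the control net is closed and the Bézier surface b is regular and non-self-intersecting. Then there exists K ∈ ℕ such that for all k ≥ K, the total discrete Gaussian curvature of the level-k control surface vanishes: the sum over all vertices q of l_k, taken modulo the identifications (u,0) ∼ (u,1) and (0,v) ∼ (1,v) of parameters and with incident triangles counted on the quotient torus, of K(q) = 2π − Σ_T θ_T(q), equals 0 (equivalently, it equals 2π times the Euler characteristic of the torus, which is the total Gaussian curvature of any smooth surface homeomorphic to the closed control surface). -/
noncomputable section
open Finset Filter

/-- The control net is closed: `p i 0 = p i m` for all `i` and `p 0 j = p n j` for all `j`. -/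
def ClosedNet (n m : ℕ) (p : ℕ → ℕ → E3) : Prop :=
  (∀ i ≤ n, p i 0 = p i m) ∧ (∀ j ≤ m, p 0 j = p n j)

/-- A closed Bézier surface is non-self-intersecting: for parameters in `[0,1]²`, two
parameters have the same image exactly when they differ by an integer in each coordinate. -/
def ClosedNonSelfIntersecting (n m : ℕ) (p : ℕ → ℕ → E3) : Prop :=
  ∀ u ∈ Set.Icc (0:ℝ) 1, ∀ v ∈ Set.Icc (0:ℝ) 1,
    ∀ u' ∈ Set.Icc (0:ℝ) 1, ∀ v' ∈ Set.Icc (0:ℝ) 1,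
      (bez n m p u v = bez n m p u' v' ↔ ((∃ z : ℤ, u - u' = z) ∧ (∃ z : ℤ, v - v' = z)))

open InnerProductGeometry Real

/-- The vertex of the level-`k` control surface at grid index `(a, b)` taken modulo the
closing identifications `(u,0) ∼ (u,1)`, `(0,v) ∼ (1,v)` (indices modulo `n·2ᵏ`, `m·2ᵏ`). -/
def torusVtx (n m : ℕ) (p : ℕ → ℕ → E3) (k : ℕ) (a b : ℕ) : E3 :=
  ctrlSurfK n m p k (((a % (n * 2 ^ k) : ℕ) : ℝ) / (n * 2 ^ k))
    (((b % (m * 2 ^ k) : ℕ) : ℝ) / (m * 2 ^ k))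

/-- The sum of the interior angles, at the torus grid vertex `(a, b)` of the level-`k`
control surface, of its six incident triangles on the quotient torus. -/
def torusAngleSumAt (n m : ℕ) (p : ℕ → ℕ → E3) (k : ℕ) (a b : ℕ) : ℝ :=
  angle (torusVtx n m p k (a+1) b - torusVtx n m p k a b)
      (torusVtx n m p k (a+1) (b+1) - torusVtx n m p k a b) +
  angle (torusVtx n m p k a (b+1) - torusVtx n m p k a b)
      (torusVtx n m p k (a+1) (b+1) - torusVtx n m p k a b) +
  angle (torusVtx n m p k (a + n * 2 ^ k - 1) b - torusVtx n m p k a b)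
      (torusVtx n m p k a (b+1) - torusVtx n m p k a b) +
  angle (torusVtx n m p k (a + n * 2 ^ k - 1) (b + m * 2 ^ k - 1) - torusVtx n m p k a b)
      (torusVtx n m p k a (b + m * 2 ^ k - 1) - torusVtx n m p k a b) +
  angle (torusVtx n m p k (a + n * 2 ^ k - 1) (b + m * 2 ^ k - 1) - torusVtx n m p k a b)
      (torusVtx n m p k (a + n * 2 ^ k - 1) b - torusVtx n m p k a b) +
  angle (torusVtx n m p k a (b + m * 2 ^ k - 1) - torusVtx n m p k a b)
      (torusVtx n m p k (a+1) b - torusVtx n m p k a b)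

namespace BezAux

lemma dcPt_add (q q' : ℕ → E3) : ∀ r i, dcPt (fun s => q s + q' s) r i = dcPt q r i + dcPt q' r i
  | 0, i => rfl
  | r + 1, i => by
    simp only [dcPt, dcPt_add q q' r]
    rw [← smul_add]
    congr 1
    abel

lemma dcPt_sub (q q' : ℕ → E3) : ∀ r i, dcPt (fun s => q s - q' s) r i = dcPt q r i - dcPt q' r i
  | 0, i => rfl
  | r + 1, i => by
    simp only [dcPt, dcPt_sub q q' r]
    rw [← smul_sub]
    congr 1
    abel

lemma dcPt_smul (c : ℝ) (q : ℕ → E3) : ∀ r i, dcPt (fun s => c • q s) r i = c • dcPt q r i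
  | 0, i => rfl
  | r + 1, i => by
    simp only [dcPt, dcPt_smul c q r, smul_add, smul_comm c]

lemma dcPt_congr (q q' : ℕ → E3) : ∀ r i, (∀ s, i ≤ s → s ≤ i + r → q s = q' s) →
    dcPt q r i = dcPt q' r i
  | 0, i, h => h i le_rfl (by omega)
  | r + 1, i, h => by
    simp only [dcPt]
    rw [dcPt_congr q q' r i (fun s h1 h2 => h s h1 (by omega)),
      dcPt_congr q q' r (i+1) (fun s h1 h2 => h s (by omega) (by omega))]

lemma dcPt_norm_le (q : ℕ → E3) (C : ℝ) : ∀ r i, (∀ s, i ≤ s → s ≤ i + r → ‖q s‖ ≤ C) →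
    ‖dcPt q r i‖ ≤ C
  | 0, i, h => h i le_rfl (by omega)
  | r + 1, i, h => by
    have h1 := dcPt_norm_le q C r i (fun s h1 h2 => h s h1 (by omega))
    have h2 := dcPt_norm_le q C r (i+1) (fun s h1 h2 => h s (by omega) (by omega))
    calc ‖dcPt q (r+1) i‖ = (2:ℝ)⁻¹ * ‖dcPt q r i + dcPt q r (i+1)‖ := by
          rw [dcPt, norm_smul]; norm_num
      _ ≤ (2:ℝ)⁻¹ * (‖dcPt q r i‖ + ‖dcPt q r (i+1)‖) := by
          gcongr; exact norm_add_le _ _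
      _ ≤ (2:ℝ)⁻¹ * (C + C) := by gcongr
      _ = C := by ring

lemma dcPt_shift_sub (q : ℕ → E3) : ∀ r i,
    dcPt q r (i+1) - dcPt q r i = dcPt (fun s => q (s+1) - q s) r i
  | 0, i => rfl
  | r + 1, i => by
    simp only [dcPt, ← smul_sub]
    congr 1
    have h1 := dcPt_shift_sub q r i
    have h2 := dcPt_shift_sub q r (i+1)
    rw [← h1, ← h2]
    abel

lemma pascal_sum (x : ℕ → E3) (r : ℕ) :
    ∑ s ∈ Finset.range (r+2), (((r+1).choose s : ℕ) : ℝ) • x s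
      = ∑ s ∈ Finset.range (r+1), ((r.choose s : ℕ) : ℝ) • x s
        + ∑ s ∈ Finset.range (r+1), ((r.choose s : ℕ) : ℝ) • x (s+1) := by
  rw [Finset.sum_range_succ' _ (r+1)]
  simp only [Nat.choose_succ_succ, Nat.cast_add, add_smul, Finset.sum_add_distrib,
    Nat.choose_zero_right, Nat.cast_one, one_smul]
  rw [Finset.sum_range_succ' (fun s => ((r.choose s : ℕ) : ℝ) • x s) r]
  rw [show ∑ s ∈ Finset.range r, ((r.choose (s+1) : ℕ) : ℝ) • x (s+1)
      = ∑ s ∈ Finset.range (r+1), ((r.choose (s+1) : ℕ) : ℝ) • x (s+1) by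
    rw [Finset.sum_range_succ]; simp]
  simp only [Nat.choose_zero_right, Nat.cast_one, one_smul]
  abel

lemma dcPt_closed (q : ℕ → E3) : ∀ r i,
    dcPt q r i = ((2:ℝ)^r)⁻¹ • ∑ s ∈ Finset.range (r+1), (r.choose s : ℝ) • q (i+s)
  | 0, i => by simp [dcPt]
  | r + 1, i => by
    rw [dcPt, dcPt_closed q r i, dcPt_closed q r (i+1), ← smul_add, smul_smul]
    rw [show ((2:ℝ)⁻¹ * ((2:ℝ)^r)⁻¹) = ((2:ℝ)^(r+1))⁻¹ by rw [pow_succ]; ring]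
    congr 1
    have := pascal_sum (fun s => q (i + s)) r
    simp only [show ∀ s, i + 1 + s = i + (s+1) from fun s => by omega]
    rw [show r + 1 + 1 = r + 2 from rfl, this]

end BezAux
namespace BezAux

/-- 1-D Bézier evaluation. -/
def bezC (N : ℕ) (q : ℕ → E3) (t : ℝ) : E3 := ∑ i ∈ Finset.range (N+1), bern N i t • q i

lemma dcHalf_smul (N : ℕ) (c : ℝ) (q : ℕ → E3) (side i : ℕ) :
    dcHalf N (fun s => c • q s) side i = c • dcHalf N q side i := by
  unfold dcHalf; split <;> apply dcPt_smul

lemma dcHalf_congr (N : ℕ) (q q' : ℕ → E3) (side i : ℕ) (hi : i ≤ N)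
    (h : ∀ s ≤ N, q s = q' s) : dcHalf N q side i = dcHalf N q' side i := by
  unfold dcHalf; split
  · exact dcPt_congr q q' i 0 (fun s _ h2 => h s (by omega))
  · exact dcPt_congr q q' (N-i) i (fun s _ h2 => h s (by omega))

lemma dcHalf_norm_le (N : ℕ) (q : ℕ → E3) (C : ℝ) (side i : ℕ) (hi : i ≤ N)
    (h : ∀ s ≤ N, ‖q s‖ ≤ C) : ‖dcHalf N q side i‖ ≤ C := by
  unfold dcHalf; split
  · exact dcPt_norm_le q C i 0 (fun s _ h2 => h s (by omega))
  · exact dcPt_norm_le q C (N-i) i (fun s _ h2 => h s (by omega))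

lemma dcHalf_diff (N : ℕ) (q : ℕ → E3) (c i : ℕ) (hi : i + 1 ≤ N) :
    dcHalf N q c (i+1) - dcHalf N q c i
      = (2:ℝ)⁻¹ • dcHalf (N-1) (fun s => q (s+1) - q s) c i := by
  unfold dcHalf; split
  · rw [show dcPt q (i+1) 0 = (2:ℝ)⁻¹ • (dcPt q i 0 + dcPt q i (0+1)) from rfl]
    rw [← dcPt_shift_sub]
    module
  · rw [show N - i = (N - (i+1)) + 1 by omega]
    rw [show dcPt q (N-(i+1)+1) i = (2:ℝ)⁻¹ • (dcPt q (N-(i+1)) i + dcPt q (N-(i+1)) (i+1)) from rfl]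
    rw [show N - 1 - i = N - (i+1) by omega, ← dcPt_shift_sub]
    module

lemma bern_eq_zero {N i : ℕ} (h : N < i) (t : ℝ) : bern N i t = 0 := by
  simp [bern, Nat.choose_eq_zero_of_lt h]

lemma bern_reflect {N i : ℕ} (h : i ≤ N) (t : ℝ) : bern N (N-i) t = bern N i (1-t) := by
  unfold bern
  rw [Nat.choose_symm h, show N - (N-i) = i by omega, sub_sub_cancel]
  ring

/-- Core binomial identity for left-half subdivision. -/
lemma bern_half_sum (N s : ℕ) (hs : s ≤ N) (t : ℝ) :
    ∑ i ∈ Finset.range (N+1), bern N i t * ((2:ℝ)^i)⁻¹ * (i.choose s : ℝ)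
      = bern N s (t/2) := by
  have e1 : ∑ i ∈ Finset.Ico s (N+1), bern N i t * ((2:ℝ)^i)⁻¹ * (i.choose s : ℝ)
      = ∑ i ∈ Finset.range (N+1), bern N i t * ((2:ℝ)^i)⁻¹ * (i.choose s : ℝ) := by
    apply Finset.sum_subset
    · intro x hx
      simp only [Finset.mem_Ico] at hx
      simp only [Finset.mem_range]
      omega
    · intro x hx hnx
      simp only [Finset.mem_Ico, Finset.mem_range, not_and, not_le] at hx hnx
      rw [Nat.choose_eq_zero_of_lt (by omega)]
      simp
  rw [← e1, Finset.sum_Ico_eq_sum_range]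
  have e2 : ∀ j ∈ Finset.range (N+1-s), bern N (s+j) t * ((2:ℝ)^(s+j))⁻¹ * ((s+j).choose s : ℝ)
      = ((N.choose s : ℝ) * (t/2)^s) *
        ((t/2)^j * (1-t)^((N-s)-j) * ((N-s).choose j : ℝ)) := by
    intro j hj
    simp only [Finset.mem_range] at hj
    have hsj : s + j ≤ N := by omega
    unfold bern
    have hcm : (N.choose (s+j) : ℝ) * ((s+j).choose s : ℝ) = (N.choose s : ℝ) * ((N-s).choose j : ℝ) := by
      rw [← Nat.cast_mul, Nat.choose_mul (n := N) (k := s+j) (s := s) (by omega), show s + j - s = j by omega,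
        Nat.cast_mul]
    have h2 : ((2:ℝ)^(s+j))⁻¹ = ((2:ℝ)^s)⁻¹ * ((2:ℝ)^j)⁻¹ := by
      rw [pow_add, mul_inv]
    have hexp : N - (s+j) = (N-s) - j := by omega
    calc (N.choose (s+j) : ℝ) * t^(s+j) * (1-t)^(N-(s+j)) * ((2:ℝ)^(s+j))⁻¹ * ((s+j).choose s : ℝ)
        = ((N.choose (s+j) : ℝ) * ((s+j).choose s : ℝ)) * (t^s * ((2:ℝ)^s)⁻¹)
          * (t^j * ((2:ℝ)^j)⁻¹) * (1-t)^((N-s)-j) := by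
          rw [hexp, h2, pow_add]; ring
      _ = ((N.choose s : ℝ) * (t/2)^s) * ((t/2)^j * (1-t)^((N-s)-j) * ((N-s).choose j : ℝ)) := by
          rw [hcm, div_pow, div_pow, div_eq_mul_inv, div_eq_mul_inv]
          ring
  rw [Finset.sum_congr rfl e2, ← Finset.mul_sum]
  rw [show N + 1 - s = (N - s) + 1 by omega, ← add_pow (t/2) (1-t) (N-s)]
  unfold bern
  rw [show t/2 + (1-t) = 1 - t/2 by ring]

/-- Left-half subdivision exactness. -/
lemma bezC_dcHalf_left (N : ℕ) (q : ℕ → E3) (t : ℝ) :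
    bezC N (dcHalf N q 0) t = bezC N q (t/2) := by
  unfold bezC
  have e0 : ∀ i ∈ Finset.range (N+1), bern N i t • dcHalf N q 0 i
      = ∑ s ∈ Finset.range (N+1), (bern N i t * ((2:ℝ)^i)⁻¹ * (i.choose s : ℝ)) • q s := by
    intro i hi
    simp only [Finset.mem_range] at hi
    rw [show dcHalf N q 0 i = dcPt q i 0 from rfl, dcPt_closed, smul_smul, Finset.smul_sum]
    have e1 : ∑ s ∈ Finset.range (i+1), (bern N i t * ((2:ℝ)^i)⁻¹) • ((i.choose s : ℝ) • q (0+s))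
        = ∑ s ∈ Finset.range (N+1), (bern N i t * ((2:ℝ)^i)⁻¹) • ((i.choose s : ℝ) • q (0+s)) := by
      apply Finset.sum_subset
      · intro x hx
        simp only [Finset.mem_range] at hx ⊢
        omega
      · intro x hx hnx
        simp only [Finset.mem_range] at hx hnx
        rw [Nat.choose_eq_zero_of_lt (by omega)]
        simp
    rw [e1]
    apply Finset.sum_congr rfl
    intro s hs
    rw [smul_smul, zero_add, mul_assoc]
  rw [Finset.sum_congr rfl e0, Finset.sum_comm]
  apply Finset.sum_congr rfl
  intro s hs
  simp only [Finset.mem_range] at hs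
  rw [← Finset.sum_smul, bern_half_sum N s (by omega)]

/-- Reflection of the right half. -/
lemma dcHalf_right_rev (N : ℕ) (q : ℕ → E3) (i : ℕ) (hi : i ≤ N) :
    dcHalf N q 1 i = dcPt (fun s => q (N - s)) (N - i) 0 := by
  rw [show dcHalf N q 1 i = dcPt q (N-i) i from rfl, dcPt_closed, dcPt_closed]
  congr 1
  rw [← Finset.sum_range_reflect (fun s => ((N-i).choose s : ℝ) • q (i+s)) (N-i+1)]
  apply Finset.sum_congr rfl
  intro s hs
  simp only [Finset.mem_range] at hs
  rw [show N - i + 1 - 1 - s = N - i - s by omega, Nat.choose_symm (by omega)]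
  have harg : i + (N - i - s) = N - (0 + s) := by omega
  rw [harg]

/-- Right-half subdivision exactness. -/
lemma bezC_dcHalf_right (N : ℕ) (q : ℕ → E3) (t : ℝ) :
    bezC N (dcHalf N q 1) t = bezC N q ((1+t)/2) := by
  unfold bezC
  have e0 : ∀ i ∈ Finset.range (N+1), bern N i t • dcHalf N q 1 i
      = (fun i' => bern N (N-i') t • dcPt (fun s => q (N-s)) i' 0) (N + 1 - 1 - i) := by
    intro i hi
    simp only [Finset.mem_range] at hi
    rw [show N + 1 - 1 - i = N - i by omega, dcHalf_right_rev N q i (by omega)]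
    simp only
    rw [show N - (N - i) = i by omega]
  rw [Finset.sum_congr rfl e0,
    Finset.sum_range_reflect (fun i' => bern N (N-i') t • dcPt (fun s => q (N-s)) i' 0) (N+1)]
  have e1 : ∀ i ∈ Finset.range (N+1), bern N (N-i) t • dcPt (fun s => q (N-s)) i 0
      = bern N i (1-t) • dcHalf N (fun s => q (N-s)) 0 i := by
    intro i hi
    simp only [Finset.mem_range] at hi
    rw [bern_reflect (by omega)]
    rfl
  rw [Finset.sum_congr rfl e1,
    show ∑ i ∈ Finset.range (N+1), bern N i (1-t) • dcHalf N (fun s => q (N-s)) 0 i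
      = bezC N (dcHalf N (fun s => q (N-s)) 0) (1-t) from rfl,
    bezC_dcHalf_left]
  unfold bezC
  have e2 : ∀ i ∈ Finset.range (N+1), bern N i ((1-t)/2) • q (N-i)
      = (fun i' => bern N (N-i') ((1-t)/2) • q (N-(N-i'))) (N + 1 - 1 - i) := by
    intro i hi
    simp only [Finset.mem_range] at hi
    simp only
    rw [show N + 1 - 1 - i = N - i by omega, show N - (N - i) = i by omega]
  rw [Finset.sum_congr rfl e2,
    Finset.sum_range_reflect (fun i' => bern N (N-i') ((1-t)/2) • q (N-(N-i'))) (N+1)]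
  apply Finset.sum_congr rfl
  intro i hi
  simp only [Finset.mem_range] at hi
  rw [bern_reflect (by omega), show N - (N - i) = i by omega,
    show 1 - (1-t)/2 = (1+t)/2 by ring]



end BezAux
namespace BezAux

lemma dcHalf_sub (N : ℕ) (q q' : ℕ → E3) (side i : ℕ) :
    dcHalf N (fun s => q s - q' s) side i = dcHalf N q side i - dcHalf N q' side i := by
  unfold dcHalf; split <;> apply dcPt_sub

lemma subNet_smul (nn mm : ℕ) (c : ℝ) (q : ℕ → ℕ → E3) (a b i j : ℕ) :
    subNet nn mm (fun i' j' => c • q i' j') a b i j = c • subNet nn mm q a b i j := by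
  unfold subNet
  rw [show (fun j' => dcHalf nn (fun i' => c • q i' j') a i)
      = (fun j' => c • dcHalf nn (fun i' => q i' j') a i) from
    funext (fun j' => dcHalf_smul nn c (fun i' => q i' j') a i), dcHalf_smul]

lemma subNet_congr (nn mm : ℕ) (q q' : ℕ → ℕ → E3) (a b i j : ℕ) (hi : i ≤ nn) (hj : j ≤ mm)
    (h : ∀ i' ≤ nn, ∀ j' ≤ mm, q i' j' = q' i' j') :
    subNet nn mm q a b i j = subNet nn mm q' a b i j := by
  unfold subNet
  apply dcHalf_congr mm _ _ b j hj
  intro j' hj'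
  exact dcHalf_congr nn _ _ a i hi (fun i' hi' => h i' hi' j' hj')

lemma subNet_norm_le (nn mm : ℕ) (q : ℕ → ℕ → E3) (C : ℝ) (a b i j : ℕ) (hi : i ≤ nn)
    (hj : j ≤ mm) (h : ∀ i' ≤ nn, ∀ j' ≤ mm, ‖q i' j'‖ ≤ C) :
    ‖subNet nn mm q a b i j‖ ≤ C := by
  unfold subNet
  apply dcHalf_norm_le mm _ C b j hj
  intro j' hj'
  exact dcHalf_norm_le nn _ C a i hi (fun i' hi' => h i' hi' j' hj')

lemma subNet_diff_i (nn mm : ℕ) (q : ℕ → ℕ → E3) (a b i j : ℕ) (hi : i + 1 ≤ nn) :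
    subNet nn mm q a b (i+1) j - subNet nn mm q a b i j
      = (2:ℝ)⁻¹ • subNet (nn-1) mm (fun i' j' => q (i'+1) j' - q i' j') a b i j := by
  unfold subNet
  rw [← dcHalf_sub]
  rw [show (fun j' => dcHalf nn (fun i' => q i' j') a (i+1) - dcHalf nn (fun i' => q i' j') a i)
      = (fun j' => (2:ℝ)⁻¹ • dcHalf (nn-1) (fun i' => q (i'+1) j' - q i' j') a i) from
    funext (fun j' => dcHalf_diff nn (fun i' => q i' j') a i hi), dcHalf_smul]

lemma subNet_diff_j (nn mm : ℕ) (q : ℕ → ℕ → E3) (a b i j : ℕ) (hj : j + 1 ≤ mm) :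
    subNet nn mm q a b i (j+1) - subNet nn mm q a b i j
      = (2:ℝ)⁻¹ • subNet nn (mm-1) (fun i' j' => q i' (j'+1) - q i' j') a b i j := by
  unfold subNet
  rw [dcHalf_diff mm _ b j hj]
  rw [show (fun s => dcHalf nn (fun i' => q i' (s+1)) a i - dcHalf nn (fun i' => q i' s) a i)
      = (fun s => dcHalf nn (fun i' => q i' (s+1) - q i' s) a i) from
    funext (fun s => (dcHalf_sub nn (fun i' => q i' (s+1)) (fun i' => q i' s) a i).symm)]

lemma levelNet_congr (nn mm : ℕ) (q q' : ℕ → ℕ → E3)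
    (h : ∀ i' ≤ nn, ∀ j' ≤ mm, q i' j' = q' i' j') :
    ∀ k r s, ∀ i ≤ nn, ∀ j ≤ mm, levelNet nn mm q k r s i j = levelNet nn mm q' k r s i j
  | 0, r, s, i, hi, j, hj => h i hi j hj
  | k+1, r, s, i, hi, j, hj => by
    rw [levelNet, levelNet]
    exact subNet_congr nn mm _ _ _ _ i j hi hj
      (fun i' hi' j' hj' => levelNet_congr nn mm q q' h k (r/2) (s/2) i' hi' j' hj')

lemma levelNet_norm_le (nn mm : ℕ) (q : ℕ → ℕ → E3) (C : ℝ)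
    (h : ∀ i' ≤ nn, ∀ j' ≤ mm, ‖q i' j'‖ ≤ C) :
    ∀ k r s, ∀ i ≤ nn, ∀ j ≤ mm, ‖levelNet nn mm q k r s i j‖ ≤ C
  | 0, r, s, i, hi, j, hj => h i hi j hj
  | k+1, r, s, i, hi, j, hj => by
    rw [levelNet]
    exact subNet_norm_le nn mm _ C _ _ i j hi hj
      (fun i' hi' j' hj' => levelNet_norm_le nn mm q C h k (r/2) (s/2) i' hi' j' hj')

lemma levelNet_diff_i (nn mm : ℕ) (q : ℕ → ℕ → E3) :
    ∀ k r s i j, i + 1 ≤ nn → j ≤ mm →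
      levelNet nn mm q k r s (i+1) j - levelNet nn mm q k r s i j
        = ((2:ℝ)^k)⁻¹ • levelNet (nn-1) mm (fun i' j' => q (i'+1) j' - q i' j') k r s i j
  | 0, r, s, i, j, hi, hj => by rw [pow_zero, inv_one, one_smul]; rfl
  | k+1, r, s, i, j, hi, hj => by
    rw [levelNet, levelNet, subNet_diff_i nn mm _ _ _ i j hi]
    rw [subNet_congr (nn-1) mm _
      (fun i' j' => ((2:ℝ)^k)⁻¹ • levelNet (nn-1) mm (fun i' j' => q (i'+1) j' - q i' j') k (r/2) (s/2) i' j')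
      (r%2) (s%2) i j (by omega) hj
      (fun i' hi' j' hj' => levelNet_diff_i nn mm q k (r/2) (s/2) i' j' (by omega) hj')]
    rw [subNet_smul, smul_smul, pow_succ]
    rw [mul_inv, mul_comm]

lemma levelNet_diff_j (nn mm : ℕ) (q : ℕ → ℕ → E3) :
    ∀ k r s i j, i ≤ nn → j + 1 ≤ mm →
      levelNet nn mm q k r s i (j+1) - levelNet nn mm q k r s i j
        = ((2:ℝ)^k)⁻¹ • levelNet nn (mm-1) (fun i' j' => q i' (j'+1) - q i' j') k r s i j
  | 0, r, s, i, j, hi, hj => by rw [pow_zero, inv_one, one_smul]; rfl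
  | k+1, r, s, i, j, hi, hj => by
    rw [levelNet, levelNet, subNet_diff_j nn mm _ _ _ i j hj]
    rw [subNet_congr nn (mm-1) _
      (fun i' j' => ((2:ℝ)^k)⁻¹ • levelNet nn (mm-1) (fun i' j' => q i' (j'+1) - q i' j') k (r/2) (s/2) i' j')
      (r%2) (s%2) i j hi (by omega)
      (fun i' hi' j' hj' => levelNet_diff_j nn mm q k (r/2) (s/2) i' j' hi' (by omega))]
    rw [subNet_smul, smul_smul, pow_succ]
    rw [mul_inv, mul_comm]

lemma bez_eq_bezC (n m : ℕ) (p : ℕ → ℕ → E3) (u v : ℝ) :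
    bez n m p u v = bezC n (fun i => bezC m (p i) v) u := by
  unfold bez bezC
  apply Finset.sum_congr rfl
  intro i _
  rw [Finset.smul_sum]
  apply Finset.sum_congr rfl
  intro j _
  rw [smul_smul]

lemma bezC_comm (N M : ℕ) (g : ℕ → ℕ → E3) (u v : ℝ) :
    bezC N (fun i => bezC M (g i) v) u = bezC M (fun j => bezC N (fun i => g i j) u) v := by
  unfold bezC
  simp only [Finset.smul_sum, smul_smul]
  rw [Finset.sum_comm]
  apply Finset.sum_congr rfl
  intro j _
  apply Finset.sum_congr rfl
  intro i _
  rw [mul_comm]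

lemma bezC_dcHalf (N : ℕ) (q : ℕ → E3) (c : ℕ) (hc : c < 2) (t : ℝ) :
    bezC N (dcHalf N q c) t = bezC N q ((c+t)/2) := by
  interval_cases c
  · rw [bezC_dcHalf_left]
    norm_num
  · rw [bezC_dcHalf_right]
    norm_num

lemma bez_subNet (n m : ℕ) (p : ℕ → ℕ → E3) (a b : ℕ) (ha : a < 2) (hb : b < 2) (u v : ℝ) :
    bez n m (subNet n m p a b) u v = bez n m p ((a+u)/2) ((b+v)/2) := by
  rw [bez_eq_bezC]
  have e1 : (fun i => bezC m (subNet n m p a b i) v)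
      = (fun i => bezC m (fun j' => dcHalf n (fun i' => p i' j') a i) ((b+v)/2)) := by
    funext i
    rw [show subNet n m p a b i = dcHalf m (fun j' => dcHalf n (fun i' => p i' j') a i) b from rfl]
    rw [bezC_dcHalf m _ b hb]
  rw [e1, bezC_comm]
  have e2 : (fun j => bezC n (fun i => dcHalf n (fun i' => p i' j) a i) u)
      = (fun j => bezC n (fun i' => p i' j) ((a+u)/2)) := by
    funext j
    rw [show (fun i => dcHalf n (fun i' => p i' j) a i) = dcHalf n (fun i' => p i' j) a from rfl]
    rw [bezC_dcHalf n _ a ha]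
  rw [e2, ← bezC_comm, ← bez_eq_bezC]

lemma bez_levelNet (n m : ℕ) (p : ℕ → ℕ → E3) :
    ∀ k r s, r < 2^k → s < 2^k → ∀ u v,
      bez n m (levelNet n m p k r s) u v = bez n m p ((r+u)/2^k) ((s+v)/2^k)
  | 0, r, s, hr, hs, u, v => by
    interval_cases r
    interval_cases s
    norm_num
    rfl
  | k+1, r, s, hr, hs, u, v => by
    rw [levelNet, bez_subNet n m _ (r%2) (s%2) (Nat.mod_lt r (by norm_num)) (Nat.mod_lt s (by norm_num))]
    rw [bez_levelNet n m p k (r/2) (s/2) (by omega) (by omega)]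
    have hr2 : ((r:ℕ):ℝ) = 2 * ((r/2 : ℕ):ℝ) + ((r%2 : ℕ):ℝ) := by
      conv_lhs => rw [← Nat.div_add_mod r 2]
      push_cast
      ring
    have hs2 : ((s:ℕ):ℝ) = 2 * ((s/2 : ℕ):ℝ) + ((s%2 : ℕ):ℝ) := by
      conv_lhs => rw [← Nat.div_add_mod s 2]
      push_cast
      ring
    have h2k : ((2:ℝ)^k) ≠ 0 := by positivity
    have eA : (((r/2 : ℕ):ℝ) + (((r%2 : ℕ):ℝ)+u)/2) / 2^k = ((r:ℝ)+u)/2^(k+1) := by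
      rw [hr2, pow_succ]
      field_simp
      ring
    have eB : (((s/2 : ℕ):ℝ) + (((s%2 : ℕ):ℝ)+v)/2) / 2^k = ((s:ℝ)+v)/2^(k+1) := by
      rw [hs2, pow_succ]
      field_simp
      ring
    rw [eA, eB]

lemma bern_zero (N i : ℕ) : bern N i 0 = if i = 0 then 1 else 0 := by
  unfold bern
  cases i
  · simp
  · simp

lemma bez_zero_zero (n m : ℕ) (q : ℕ → ℕ → E3) : bez n m q 0 0 = q 0 0 := by
  unfold bez
  simp only [bern_zero, ite_mul, one_mul, zero_mul, mul_ite, mul_one, mul_zero]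
  rw [Finset.sum_eq_single 0]
  · rw [Finset.sum_eq_single 0]
    · simp
    · intro j _ hj
      simp [hj]
    · intro h
      exact absurd (Finset.mem_range.2 (by omega)) h
  · intro i _ hi
    rw [Finset.sum_eq_single 0] <;> simp [hi]
  · intro h
    exact absurd (Finset.mem_range.2 (by omega)) h

lemma levelNet_corner (n m : ℕ) (p : ℕ → ℕ → E3) (k r s : ℕ) (hr : r < 2^k) (hs : s < 2^k) :
    levelNet n m p k r s 0 0 = bez n m p ((r:ℝ)/2^k) ((s:ℝ)/2^k) := by
  have := bez_levelNet n m p k r s hr hs 0 0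
  rw [bez_zero_zero] at this
  rw [this, add_zero, add_zero]

end BezAux
namespace BezAux

lemma dcPt_comm (q : ℕ → ℕ → E3) (rj j : ℕ) :
    ∀ ri i, dcPt (fun i' => dcPt (fun j' => q i' j') rj j) ri i
      = dcPt (fun j' => dcPt (fun i' => q i' j') ri i) rj j
  | 0, i => rfl
  | ri+1, i => by
    rw [dcPt, dcPt_comm q rj j ri i, dcPt_comm q rj j ri (i+1), ← dcPt_add, ← dcPt_smul]
    rfl

lemma dcHalf_comm (nn mm : ℕ) (q : ℕ → ℕ → E3) (a b i j : ℕ) :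
    dcHalf mm (fun j' => dcHalf nn (fun i' => q i' j') a i) b j
      = dcHalf nn (fun i' => dcHalf mm (fun j' => q i' j') b j) a i := by
  unfold dcHalf
  by_cases ha : a = 0 <;> by_cases hb : b = 0 <;> simp only [ha, hb, if_pos, if_neg, if_true,
    if_false, reduceIte] <;> first
    | exact (dcPt_comm q j 0 i 0).symm
    | exact (dcPt_comm q (mm-j) j i 0).symm
    | exact (dcPt_comm q j 0 (nn-i) i).symm
    | exact (dcPt_comm q (mm-j) j (nn-i) i).symm

lemma subNet_transpose (n m : ℕ) (p : ℕ → ℕ → E3) (a b i j : ℕ) :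
    subNet m n (fun j' i' => p i' j') b a j i = subNet n m p a b i j := by
  unfold subNet
  exact (dcHalf_comm n m p a b i j).symm

lemma levelNet_transpose (n m : ℕ) (p : ℕ → ℕ → E3) :
    ∀ k r s i j, levelNet m n (fun j' i' => p i' j') k s r j i = levelNet n m p k r s i j
  | 0, r, s, i, j => rfl
  | k+1, r, s, i, j => by
    rw [levelNet, levelNet]
    rw [show levelNet m n (fun j' i' => p i' j') k (s/2) (r/2)
        = (fun j' i' => levelNet n m p k (r/2) (s/2) i' j') from
      funext fun j' => funext fun i' => levelNet_transpose n m p k (r/2) (s/2) i' j']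
    exact subNet_transpose n m _ (r%2) (s%2) i j

lemma levelNet_compat_h (n m : ℕ) (p : ℕ → ℕ → E3) :
    ∀ k r s j, r + 1 < 2^k → j ≤ m →
      levelNet n m p k r s n j = levelNet n m p k (r+1) s 0 j
  | 0, r, s, j, hr, hj => by omega
  | k+1, r, s, j, hr, hj => by
    have h2 : 2^(k+1) = 2*2^k := by rw [pow_succ]; ring
    rcases Nat.mod_two_eq_zero_or_one r with hr0 | hr1
    · rw [levelNet, levelNet, show (r+1)/2 = r/2 by omega, hr0, show (r+1)%2 = 1 by omega]
      rfl
    · rw [levelNet, levelNet, hr1, show (r+1)%2 = 0 by omega, show (r+1)/2 = r/2+1 by omega]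
      unfold subNet
      apply dcHalf_congr m _ _ (s%2) j hj
      intro j' hj'
      have eL : dcHalf n (fun i' => levelNet n m p k (r/2) (s/2) i' j') 1 n
          = levelNet n m p k (r/2) (s/2) n j' := by
        unfold dcHalf
        rw [if_neg (by norm_num), Nat.sub_self]
        rfl
      have eR : dcHalf n (fun i' => levelNet n m p k (r/2+1) (s/2) i' j') 0 0
          = levelNet n m p k (r/2+1) (s/2) 0 j' := by rfl
      rw [eL, eR]
      exact levelNet_compat_h n m p k (r/2) (s/2) j' (by omega) hj'

lemma levelNet_wrap_h (n m : ℕ) (p : ℕ → ℕ → E3) (hw : ∀ j ≤ m, p 0 j = p n j) :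
    ∀ k s j, j ≤ m → levelNet n m p k (2^k-1) s n j = levelNet n m p k 0 s 0 j
  | 0, s, j, hj => (hw j hj).symm
  | k+1, s, j, hj => by
    have h2 : 2^(k+1) = 2*2^k := by rw [pow_succ]; ring
    have h2k : 1 ≤ 2^k := Nat.one_le_two_pow
    rw [levelNet, levelNet, show (2^(k+1)-1)/2 = 2^k - 1 by omega,
      show (2^(k+1)-1)%2 = 1 by omega, show (0:ℕ)/2 = 0 by omega, show (0:ℕ)%2 = 0 by omega]
    unfold subNet
    apply dcHalf_congr m _ _ (s%2) j hj
    intro j' hj'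
    have eL : dcHalf n (fun i' => levelNet n m p k (2^k-1) (s/2) i' j') 1 n
        = levelNet n m p k (2^k-1) (s/2) n j' := by
      unfold dcHalf
      rw [if_neg (by norm_num), Nat.sub_self]
      rfl
    have eR : dcHalf n (fun i' => levelNet n m p k 0 (s/2) i' j') 0 0
        = levelNet n m p k 0 (s/2) 0 j' := by rfl
    rw [eL, eR]
    exact levelNet_wrap_h n m p hw k (s/2) j' hj'

lemma ctrlSurf_grid (n m : ℕ) (q : ℕ → ℕ → E3) (hn : 1 ≤ n) (hm : 1 ≤ m) (i j : ℕ)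
    (hi : i < n) (hj : j < m) :
    ctrlSurf n m q ((i:ℝ)/n) ((j:ℝ)/m) = q i j := by
  have hn0 : (n:ℝ) ≠ 0 := by positivity
  have hm0 : (m:ℝ) ≠ 0 := by positivity
  unfold ctrlSurf
  have e1 : (i:ℝ)/n * n = (i:ℝ) := by field_simp
  have e2 : (j:ℝ)/m * m = (j:ℝ) := by field_simp
  rw [e1, e2, Nat.floor_natCast, Nat.floor_natCast,
    min_eq_left (by omega), min_eq_left (by omega)]
  simp only [sub_self, le_refl, if_true, sub_zero, zero_smul, add_zero, one_smul]

lemma ctrlSurfK_grid (n m : ℕ) (p : ℕ → ℕ → E3) (k : ℕ) (hn : 1 ≤ n) (hm : 1 ≤ m)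
    (a b : ℕ) (ha : a < n * 2^k) (hb : b < m * 2^k) :
    ctrlSurfK n m p k ((a:ℝ)/(n * 2^k)) ((b:ℝ)/(m * 2^k))
      = levelNet n m p k (a/n) (b/m) (a%n) (b%m) := by
  have hn0 : (n:ℝ) ≠ 0 := by positivity
  have hm0 : (m:ℝ) ≠ 0 := by positivity
  have h2k : ((2:ℝ)^k) ≠ 0 := by positivity
  unfold ctrlSurfK
  have e1 : (a:ℝ)/(n * 2^k) * 2^k = (a:ℝ)/n := by field_simp
  have e2 : (b:ℝ)/(m * 2^k) * 2^k = (b:ℝ)/m := by field_simp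
  rw [e1, e2]
  have f1 : ⌊(a:ℝ)/(n:ℝ)⌋₊ = a / n := by
    rw [Nat.floor_div_natCast, Nat.floor_natCast]
  have f2 : ⌊(b:ℝ)/(m:ℝ)⌋₊ = b / m := by
    rw [Nat.floor_div_natCast, Nat.floor_natCast]
  have hr : a / n ≤ 2^k - 1 := by
    have : a / n < 2^k := (Nat.div_lt_iff_lt_mul (by omega)).2 (by rw [Nat.mul_comm]; exact ha)
    omega
  have hs : b / m ≤ 2^k - 1 := by
    have : b / m < 2^k := (Nat.div_lt_iff_lt_mul (by omega)).2 (by rw [Nat.mul_comm]; exact hb)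
    omega
  rw [f1, f2, min_eq_left hr, min_eq_left hs]
  have g1 : (a:ℝ)/n - ((a/n : ℕ):ℝ) = ((a % n : ℕ):ℝ)/n := by
    have h := Nat.div_add_mod a n
    have hcast : (a:ℝ) = (n:ℝ) * ((a/n : ℕ):ℝ) + ((a % n : ℕ):ℝ) := by
      exact_mod_cast (congrArg (Nat.cast (R := ℝ)) h).symm
    rw [hcast]
    field_simp
    ring
  have g2 : (b:ℝ)/m - ((b/m : ℕ):ℝ) = ((b % m : ℕ):ℝ)/m := by
    have h := Nat.div_add_mod b m
    have hcast : (b:ℝ) = (m:ℝ) * ((b/m : ℕ):ℝ) + ((b % m : ℕ):ℝ) := by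
      exact_mod_cast (congrArg (Nat.cast (R := ℝ)) h).symm
    rw [hcast]
    field_simp
    ring
  show ctrlSurf n m (levelNet n m p k (a/n) (b/m))
      ((a:ℝ)/n - ((a/n : ℕ):ℝ)) ((b:ℝ)/m - ((b/m : ℕ):ℝ))
    = levelNet n m p k (a/n) (b/m) (a%n) (b%m)
  rw [g1, g2,
    ctrlSurf_grid n m _ hn hm (a%n) (b%m) (Nat.mod_lt a (by omega)) (Nat.mod_lt b (by omega))]

lemma torusVtx_eval (n m : ℕ) (p : ℕ → ℕ → E3) (k : ℕ) (hn : 1 ≤ n) (hm : 1 ≤ m)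
    (a b : ℕ) (ha : a < n * 2^k) (hb : b < m * 2^k) :
    torusVtx n m p k a b = levelNet n m p k (a/n) (b/m) (a%n) (b%m) := by
  unfold torusVtx
  rw [Nat.mod_eq_of_lt ha, Nat.mod_eq_of_lt hb]
  exact ctrlSurfK_grid n m p k hn hm a b ha hb

lemma torusVtx_mod (n m : ℕ) (p : ℕ → ℕ → E3) (k a b : ℕ) :
    torusVtx n m p k a b = torusVtx n m p k (a % (n*2^k)) (b % (m*2^k)) := by
  unfold torusVtx
  rw [Nat.mod_mod_of_dvd a dvd_rfl, Nat.mod_mod_of_dvd b dvd_rfl]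

end BezAux
namespace BezAux

/-- Derivative of the Bernstein polynomial (raw product-rule form). -/
def dbern (N i : ℕ) (t : ℝ) : ℝ :=
  (N.choose i : ℝ) * ((i:ℝ) * t^(i-1)) * (1-t)^(N-i)
    + (N.choose i : ℝ) * t^i * (((N-i : ℕ):ℝ) * (1-t)^(N-i-1) * (-1))

lemma hasDerivAt_bern (N i : ℕ) (t : ℝ) :
    HasDerivAt (fun t' => bern N i t') (dbern N i t) t := by
  have h1 : HasDerivAt (fun t' : ℝ => (N.choose i : ℝ) * t' ^ i)
      ((N.choose i : ℝ) * ((i:ℝ) * t^(i-1))) t := (hasDerivAt_pow i t).const_mul _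
  have hl : HasDerivAt (fun t' : ℝ => 1 - t') (-1) t := by
    simpa using (hasDerivAt_id t).const_sub 1
  have h2 : HasDerivAt (fun t' : ℝ => (1 - t') ^ (N-i))
      ((((N-i : ℕ)):ℝ) * (1-t)^(N-i-1) * (-1)) t := hl.pow (N-i)
  have := h1.mul h2
  unfold bern dbern
  exact this

lemma sum_dbern (N : ℕ) (hN : 1 ≤ N) (q : ℕ → E3) (t : ℝ) :
    ∑ i ∈ Finset.range (N+1), dbern N i t • q i
      = (N:ℝ) • ∑ i ∈ Finset.range N, bern (N-1) i t • (q (i+1) - q i) := by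
  have hA : ∀ i, (dbern N i t) • q i
      = ((N.choose i : ℝ) * ((i:ℝ) * t^(i-1)) * (1-t)^(N-i)) • q i
        - ((N.choose i : ℝ) * t^i * (((N-i : ℕ):ℝ) * (1-t)^(N-i-1))) • q i := by
    intro i
    rw [← sub_smul]
    congr 1
    unfold dbern
    ring
  simp only [hA]
  rw [Finset.sum_sub_distrib]
  have eA : ∑ i ∈ Finset.range (N+1), ((N.choose i : ℝ) * ((i:ℝ) * t^(i-1)) * (1-t)^(N-i)) • q i
      = ∑ i ∈ Finset.range N, ((N:ℝ) * bern (N-1) i t) • q (i+1) := by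
    rw [Finset.sum_range_succ']
    simp only [Nat.cast_zero, mul_zero, zero_mul, zero_smul, add_zero]
    apply Finset.sum_congr rfl
    intro i hi
    simp only [Finset.mem_range] at hi
    congr 1
    have hch : (N.choose (i+1) : ℝ) * ((i+1:ℕ):ℝ) = (N:ℝ) * ((N-1).choose i : ℝ) := by
      have := Nat.add_one_mul_choose_eq (N-1) i
      rw [show (N-1) + 1 = N by omega] at this
      exact_mod_cast (congrArg (Nat.cast (R := ℝ)) this).symm
    unfold bern
    rw [show N - (i+1) = (N-1) - i by omega, show (i+1) - 1 = i by omega]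
    push_cast at hch ⊢
    linear_combination hch * (t^i * (1-t)^(N-1-i))
  have eB : ∑ i ∈ Finset.range (N+1), ((N.choose i : ℝ) * t^i * (((N-i : ℕ):ℝ) * (1-t)^(N-i-1))) • q i
      = ∑ i ∈ Finset.range N, ((N:ℝ) * bern (N-1) i t) • q i := by
    rw [Finset.sum_range_succ]
    simp only [Nat.sub_self, Nat.cast_zero, zero_mul, mul_zero, zero_smul, add_zero]
    apply Finset.sum_congr rfl
    intro i hi
    simp only [Finset.mem_range] at hi
    congr 1
    have hch : (N.choose i : ℝ) * (((N-i : ℕ)):ℝ) = (N:ℝ) * ((N-1).choose i : ℝ) := by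
      have h1 : N.choose i = N.choose (N - i) := (Nat.choose_symm (by omega)).symm
      have h2 : N - i = (N - 1 - i) + 1 := by omega
      have h3 := Nat.add_one_mul_choose_eq (N-1) (N-1-i)
      rw [show (N-1) + 1 = N by omega] at h3
      have h4 : (N-1).choose (N-1-i) = (N-1).choose i := Nat.choose_symm (by omega)
      rw [h4] at h3
      have hnat : N.choose i * (N - i) = N * (N-1).choose i := by
        rw [h1, h2, h3]
      exact_mod_cast congrArg (Nat.cast (R := ℝ)) hnat
    unfold bern
    rw [show N - i - 1 = (N-1) - i by omega]
    push_cast at hch ⊢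
    linear_combination hch * (t^i * (1-t)^(N-1-i))
  rw [eA, eB, ← Finset.sum_sub_distrib, Finset.smul_sum]
  apply Finset.sum_congr rfl
  intro i hi
  rw [← smul_sub, smul_smul]

lemma bezU_eq (n m : ℕ) (hn : 1 ≤ n) (p : ℕ → ℕ → E3) (u v : ℝ) :
    bezU n m p u v = (n:ℝ) • bez (n-1) m (fun i j => p (i+1) j - p i j) u v := by
  have hd : HasDerivAt (fun u' => bez n m p u' v)
      (∑ i ∈ Finset.range (n+1), ∑ j ∈ Finset.range (m+1),
        (dbern n i u * bern m j v) • p i j) u := by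
    unfold bez
    apply HasDerivAt.fun_sum
    intro i _
    apply HasDerivAt.fun_sum
    intro j _
    exact ((hasDerivAt_bern n i u).mul_const (bern m j v)).smul_const (p i j)
  rw [bezU, hd.deriv]
  have e1 : ∀ i ∈ Finset.range (n+1),
      ∑ j ∈ Finset.range (m+1), (dbern n i u * bern m j v) • p i j
        = dbern n i u • ∑ j ∈ Finset.range (m+1), bern m j v • p i j := by
    intro i _
    rw [Finset.smul_sum]
    apply Finset.sum_congr rfl
    intro j _
    rw [smul_smul]
  rw [Finset.sum_congr rfl e1, sum_dbern n hn _ u]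
  unfold bez
  rw [show n - 1 + 1 = n by omega, Finset.smul_sum, Finset.smul_sum]
  apply Finset.sum_congr rfl
  intro i _
  congr 1
  rw [← Finset.sum_sub_distrib, Finset.smul_sum]
  apply Finset.sum_congr rfl
  intro j _
  rw [← smul_sub, smul_smul]

lemma bez_transpose (n m : ℕ) (p : ℕ → ℕ → E3) (u v : ℝ) :
    bez n m p u v = bez m n (fun j i => p i j) v u := by
  unfold bez
  rw [Finset.sum_comm]
  apply Finset.sum_congr rfl
  intro j _
  apply Finset.sum_congr rfl
  intro i _
  rw [mul_comm]

lemma bezV_eq (n m : ℕ) (hm : 1 ≤ m) (p : ℕ → ℕ → E3) (u v : ℝ) :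
    bezV n m p u v = (m:ℝ) • bez n (m-1) (fun i j => p i (j+1) - p i j) u v := by
  have e0 : (fun v' => bez n m p u v') = (fun v' => bez m n (fun j i => p i j) v' u) :=
    funext fun v' => bez_transpose n m p u v'
  rw [bezV, e0, ← bezU]
  rw [bezU_eq m n hm (fun j i => p i j) v u]
  congr 1
  exact (bez_transpose n (m-1) _ u v).symm

lemma bez_cont (n m : ℕ) (q : ℕ → ℕ → E3) :
    Continuous (fun w : ℝ × ℝ => bez n m q w.1 w.2) := by
  unfold bez
  apply continuous_finset_sum
  intro i _
  apply continuous_finset_sum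
  intro j _
  apply Continuous.fun_smul _ continuous_const
  apply Continuous.mul
  · unfold bern
    exact (continuous_const.mul (continuous_fst.pow i)).mul
      ((continuous_const.sub continuous_fst).pow (n-i))
  · unfold bern
    exact (continuous_const.mul (continuous_snd.pow j)).mul
      ((continuous_const.sub continuous_snd).pow (m-j))

end BezAux
namespace BezAux

lemma net_bound (nn mm : ℕ) (q : ℕ → ℕ → E3) :
    ∃ C : ℝ, 0 ≤ C ∧ ∀ i ≤ nn, ∀ j ≤ mm, ‖q i j‖ ≤ C := by
  refine ⟨∑ i ∈ Finset.range (nn+1), ∑ j ∈ Finset.range (mm+1), ‖q i j‖, by positivity, ?_⟩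
  intro i hi j hj
  calc ‖q i j‖ ≤ ∑ j' ∈ Finset.range (mm+1), ‖q i j'‖ :=
        Finset.single_le_sum (fun _ _ => norm_nonneg _) (Finset.mem_range.2 (by omega))
    _ ≤ ∑ i' ∈ Finset.range (nn+1), ∑ j' ∈ Finset.range (mm+1), ‖q i' j'‖ :=
        Finset.single_le_sum (f := fun i' => ∑ j' ∈ Finset.range (mm+1), ‖q i' j'‖)
          (fun _ _ => by positivity) (Finset.mem_range.2 (by omega))

lemma levelNet_dist_i (nn mm : ℕ) (q : ℕ → ℕ → E3) (k r s : ℕ) (C : ℝ) (hC : 0 ≤ C)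
    (hb : ∀ i' ≤ nn-1, ∀ j' ≤ mm, ‖q (i'+1) j' - q i' j'‖ ≤ C) :
    ∀ i ≤ nn, ∀ j ≤ mm, ‖levelNet nn mm q k r s i j - levelNet nn mm q k r s 0 j‖
      ≤ i * (((2:ℝ)^k)⁻¹ * C)
  | 0, hi, j, hj => by simp
  | i+1, hi, j, hj => by
    have h1 := levelNet_dist_i nn mm q k r s C hC hb i (by omega) j hj
    have h2 : ‖levelNet nn mm q k r s (i+1) j - levelNet nn mm q k r s i j‖
        ≤ ((2:ℝ)^k)⁻¹ * C := by
      rw [levelNet_diff_i nn mm q k r s i j (by omega) hj, norm_smul]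
      have : ‖levelNet (nn-1) mm (fun i' j' => q (i'+1) j' - q i' j') k r s i j‖ ≤ C :=
        levelNet_norm_le (nn-1) mm _ C hb k r s i (by omega) j hj
      calc ‖(((2:ℝ)^k)⁻¹ : ℝ)‖ * ‖levelNet (nn-1) mm (fun i' j' => q (i'+1) j' - q i' j') k r s i j‖
          = ((2:ℝ)^k)⁻¹ * ‖levelNet (nn-1) mm (fun i' j' => q (i'+1) j' - q i' j') k r s i j‖ := by
            rw [Real.norm_eq_abs, abs_of_pos (by positivity)]
        _ ≤ ((2:ℝ)^k)⁻¹ * C := by gcongr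
    calc ‖levelNet nn mm q k r s (i+1) j - levelNet nn mm q k r s 0 j‖
        ≤ ‖levelNet nn mm q k r s (i+1) j - levelNet nn mm q k r s i j‖
          + ‖levelNet nn mm q k r s i j - levelNet nn mm q k r s 0 j‖ := by
          exact norm_sub_le_norm_sub_add_norm_sub _ _ _
      _ ≤ ((2:ℝ)^k)⁻¹ * C + i * (((2:ℝ)^k)⁻¹ * C) := by gcongr
      _ = (i+1 : ℕ) * (((2:ℝ)^k)⁻¹ * C) := by push_cast; ring

lemma levelNet_dist_j (nn mm : ℕ) (q : ℕ → ℕ → E3) (k r s : ℕ) (C : ℝ) (hC : 0 ≤ C)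
    (hb : ∀ i' ≤ nn, ∀ j' ≤ mm-1, ‖q i' (j'+1) - q i' j'‖ ≤ C) :
    ∀ j ≤ mm, ∀ i ≤ nn, ‖levelNet nn mm q k r s i j - levelNet nn mm q k r s i 0‖
      ≤ j * (((2:ℝ)^k)⁻¹ * C)
  | 0, hj, i, hi => by simp
  | j+1, hj, i, hi => by
    have h1 := levelNet_dist_j nn mm q k r s C hC hb j (by omega) i hi
    have h2 : ‖levelNet nn mm q k r s i (j+1) - levelNet nn mm q k r s i j‖
        ≤ ((2:ℝ)^k)⁻¹ * C := by
      rw [levelNet_diff_j nn mm q k r s i j hi (by omega), norm_smul]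
      have hq : ∀ i' ≤ nn, ∀ j' ≤ mm-1, ‖(fun i' j' => q i' (j'+1) - q i' j') i' j'‖ ≤ C := hb
      have : ‖levelNet nn (mm-1) (fun i' j' => q i' (j'+1) - q i' j') k r s i j‖ ≤ C :=
        levelNet_norm_le nn (mm-1) _ C hq k r s i hi j (by omega)
      calc ‖(((2:ℝ)^k)⁻¹ : ℝ)‖ * ‖levelNet nn (mm-1) (fun i' j' => q i' (j'+1) - q i' j') k r s i j‖
          = ((2:ℝ)^k)⁻¹ * ‖levelNet nn (mm-1) (fun i' j' => q i' (j'+1) - q i' j') k r s i j‖ := by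
            rw [Real.norm_eq_abs, abs_of_pos (by positivity)]
        _ ≤ ((2:ℝ)^k)⁻¹ * C := by gcongr
    calc ‖levelNet nn mm q k r s i (j+1) - levelNet nn mm q k r s i 0‖
        ≤ ‖levelNet nn mm q k r s i (j+1) - levelNet nn mm q k r s i j‖
          + ‖levelNet nn mm q k r s i j - levelNet nn mm q k r s i 0‖ := by
          exact norm_sub_le_norm_sub_add_norm_sub _ _ _
      _ ≤ ((2:ℝ)^k)⁻¹ * C + j * (((2:ℝ)^k)⁻¹ * C) := by gcongr
      _ = (j+1 : ℕ) * (((2:ℝ)^k)⁻¹ * C) := by push_cast; ring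

lemma succ_divmod_lt (x d : ℕ) (hd : 1 ≤ d) (h : x % d + 1 < d) :
    (x+1)/d = x/d ∧ (x+1)%d = x%d + 1 := by
  have hx := Nat.div_add_mod x d
  have hrw : x + 1 = (x % d + 1) + d * (x/d) := by omega
  constructor
  · rw [hrw, Nat.add_mul_div_left _ _ (by omega), Nat.div_eq_of_lt h]
    omega
  · rw [hrw, Nat.add_mul_mod_self_left, Nat.mod_eq_of_lt h]

lemma succ_divmod_eq (x d : ℕ) (hd : 1 ≤ d) (h : x % d + 1 = d) :
    (x+1)/d = x/d + 1 ∧ (x+1)%d = 0 := by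
  have hx := Nat.div_add_mod x d
  have hrw : x + 1 = d * (x/d + 1) := by rw [Nat.mul_succ]; omega
  constructor
  · rw [hrw, Nat.mul_div_cancel_left _ (by omega)]
  · rw [hrw, Nat.mul_mod_right]

/-- Master lemma: for large `k` horizontally adjacent torus vertices are distinct. -/
lemma edgeH_master (n m : ℕ) (hn : 1 ≤ n) (hm : 1 ≤ m) (p : ℕ → ℕ → E3)
    (hwrap : ∀ j ≤ m, p 0 j = p n j)
    (hU : ∀ u ∈ Set.Icc (0:ℝ) 1, ∀ v ∈ Set.Icc (0:ℝ) 1,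
        bez (n-1) m (fun i j => p (i+1) j - p i j) u v ≠ 0) :
    ∃ K : ℕ, ∀ k ≥ K, ∀ a b : ℕ,
      torusVtx n m p k (a+1) b ≠ torusVtx n m p k a b := by
  set g : ℕ → ℕ → E3 := fun i j => p (i+1) j - p i j with hg
  -- minimum of ‖bez g‖ on the unit square
  have hcomp : IsCompact (Set.Icc (0:ℝ) 1 ×ˢ Set.Icc (0:ℝ) 1) :=
    IsCompact.prod isCompact_Icc isCompact_Icc
  have hne : (Set.Icc (0:ℝ) 1 ×ˢ Set.Icc (0:ℝ) 1).Nonempty :=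
    ⟨(0,0), by constructor <;> exact Set.mem_Icc.2 ⟨le_refl _, zero_le_one⟩⟩
  obtain ⟨w0, hw0, hmin'⟩ := hcomp.exists_isMinOn hne
    ((bez_cont (n-1) m g).norm.continuousOn)
  have hmin : ∀ w ∈ Set.Icc (0:ℝ) 1 ×ˢ Set.Icc (0:ℝ) 1,
      ‖bez (n-1) m g w0.1 w0.2‖ ≤ ‖bez (n-1) m g w.1 w.2‖ := fun w hw => hmin' hw
  set δ : ℝ := ‖bez (n-1) m g w0.1 w0.2‖ with hδdef
  have hδ : 0 < δ := by
    rw [hδdef, norm_pos_iff]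
    exact hU w0.1 hw0.1 w0.2 hw0.2
  -- bounds on second difference nets
  obtain ⟨C1, hC1n, hC1⟩ := net_bound (n-1-1) m (fun i j => g (i+1) j - g i j)
  obtain ⟨C2, hC2n, hC2⟩ := net_bound (n-1) (m-1) (fun i j => g i (j+1) - g i j)
  obtain ⟨K0, hK0⟩ := pow_unbounded_of_one_lt (y := (2:ℝ)) ((n * C1 + m * C2)/δ) one_lt_two
  refine ⟨max K0 1, fun k hk a b => ?_⟩
  have hk1 : 1 ≤ k := le_trans (le_max_right _ _) hk
  have hkK : (n * C1 + m * C2) * ((2:ℝ)^k)⁻¹ < δ := by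
    rw [div_lt_iff₀ hδ] at hK0
    have h2le : (2:ℝ)^K0 ≤ (2:ℝ)^k :=
      pow_le_pow_right₀ one_le_two (le_trans (le_max_left _ _) hk)
    have hpos : (0:ℝ) < (2:ℝ)^k := by positivity
    rw [mul_inv_lt_iff₀ hpos]
    calc (n * C1 + m * C2 : ℝ) < 2^K0 * δ := hK0
      _ ≤ 2^k * δ := by gcongr
      _ = δ * 2^k := by ring
  -- the key: every point of the difference net at level k is nonzero
  have hGnz : ∀ r s i j, r < 2^k → s < 2^k → i ≤ n-1 → j ≤ m →
      levelNet (n-1) m g k r s i j ≠ 0 := by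
    intro r s i j hr hs hi hj
    set G := levelNet (n-1) m g k r s i j with hGdef
    have hcorner : levelNet (n-1) m g k r s 0 0
        = bez (n-1) m g ((r:ℝ)/2^k) ((s:ℝ)/2^k) := levelNet_corner (n-1) m g k r s hr hs
    have hbδ : δ ≤ ‖bez (n-1) m g ((r:ℝ)/2^k) ((s:ℝ)/2^k)‖ := by
      apply hmin ((r:ℝ)/2^k, (s:ℝ)/2^k)
      have h2pos : (0:ℝ) < 2^k := by positivity
      constructor <;> exact Set.mem_Icc.2 ⟨by positivity,
        by rw [div_le_one h2pos]; exact_mod_cast Nat.le_of_lt (by assumption)⟩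
    have hti : ‖levelNet (n-1) m g k r s i j - levelNet (n-1) m g k r s 0 j‖
        ≤ i * (((2:ℝ)^k)⁻¹ * C1) :=
      levelNet_dist_i (n-1) m g k r s C1 hC1n
        (fun i' hi' j' hj' => hC1 i' hi' j' hj') i hi j hj
    have htj : ‖levelNet (n-1) m g k r s 0 j - levelNet (n-1) m g k r s 0 0‖
        ≤ j * (((2:ℝ)^k)⁻¹ * C2) :=
      levelNet_dist_j (n-1) m g k r s C2 hC2n
        (fun i' hi' j' hj' => hC2 i' hi' j' hj') j hj 0 (by omega)
    have htotal : ‖G - bez (n-1) m g ((r:ℝ)/2^k) ((s:ℝ)/2^k)‖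
        ≤ (n * C1 + m * C2) * ((2:ℝ)^k)⁻¹ := by
      rw [← hcorner]
      calc ‖G - levelNet (n-1) m g k r s 0 0‖
          ≤ ‖G - levelNet (n-1) m g k r s 0 j‖
            + ‖levelNet (n-1) m g k r s 0 j - levelNet (n-1) m g k r s 0 0‖ :=
            norm_sub_le_norm_sub_add_norm_sub _ _ _
        _ ≤ i * (((2:ℝ)^k)⁻¹ * C1) + j * (((2:ℝ)^k)⁻¹ * C2) := by
            exact add_le_add hti htj
        _ ≤ n * (((2:ℝ)^k)⁻¹ * C1) + m * (((2:ℝ)^k)⁻¹ * C2) := by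
            have hin : (i:ℝ) ≤ n := by exact_mod_cast le_trans hi (by omega)
            have hjm : (j:ℝ) ≤ m := by exact_mod_cast hj
            have t1 : (0:ℝ) ≤ ((2:ℝ)^k)⁻¹ * C1 := by positivity
            have t2 : (0:ℝ) ≤ ((2:ℝ)^k)⁻¹ * C2 := by positivity
            exact add_le_add (mul_le_mul_of_nonneg_right hin t1)
              (mul_le_mul_of_nonneg_right hjm t2)
        _ = (n * C1 + m * C2) * ((2:ℝ)^k)⁻¹ := by ring
    intro hG0
    rw [hG0, zero_sub, norm_neg] at htotal
    exact absurd (lt_of_le_of_lt htotal hkK) (not_lt.2 hbδ)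
  -- reduce to indices inside the fundamental domain
  set N := n * 2^k with hN
  set M := m * 2^k with hM
  have hN2 : 2 ≤ N := by
    have : 2 ≤ 2^k := by
      calc 2 = 2^1 := (pow_one 2).symm
      _ ≤ 2^k := Nat.pow_le_pow_right (by omega) hk1
    calc 2 ≤ 2^k := this
    _ ≤ n * 2^k := Nat.le_mul_of_pos_left _ (by omega)
  have hM1 : 1 ≤ M := by
    have : 1 ≤ 2^k := Nat.one_le_two_pow
    calc 1 ≤ 2^k := this
    _ ≤ m * 2^k := Nat.le_mul_of_pos_left _ (by omega)
  set α := a % N with hα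
  set β := b % M with hβ
  have hαN : α < N := Nat.mod_lt a (by omega)
  have hβM : β < M := Nat.mod_lt b (by omega)
  have hmod1 : torusVtx n m p k a b = torusVtx n m p k α β := torusVtx_mod n m p k a b
  have hmod2 : torusVtx n m p k (a+1) b = torusVtx n m p k (α+1) β := by
    have hidx : (a+1) % N = (α+1) % N := by
      conv_lhs => rw [Nat.add_mod]
      conv_rhs => rw [Nat.add_mod]
      rw [hα, Nat.mod_mod_of_dvd a dvd_rfl]
    have hidx2 : β % M = b % M := by rw [hβ]; exact Nat.mod_mod_of_dvd b dvd_rfl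
    rw [torusVtx_mod n m p k (a+1) b, torusVtx_mod n m p k (α+1) β, hidx, hidx2]
  rw [hmod1, hmod2]
  -- evaluate the two vertices as control points
  have hrα : α / n < 2^k := (Nat.div_lt_iff_lt_mul (by omega)).2 (by rw [Nat.mul_comm]; exact hαN)
  have hiα : α % n < n := Nat.mod_lt α (by omega)
  have hsβ : β / m < 2^k := (Nat.div_lt_iff_lt_mul (by omega)).2 (by rw [Nat.mul_comm]; exact hβM)
  have hjβ : β % m < m := Nat.mod_lt β (by omega)
  have hVa : torusVtx n m p k α β = levelNet n m p k (α/n) (β/m) (α%n) (β%m) :=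
    torusVtx_eval n m p k hn hm α β hαN hβM
  have hVa1 : torusVtx n m p k (α+1) β = levelNet n m p k (α/n) (β/m) (α%n+1) (β%m) := by
    rcases Nat.lt_or_ge (α % n + 1) n with hcase | hcase
    · -- interior of the square (subcase A)
      obtain ⟨ed, em⟩ := succ_divmod_lt α n hn hcase
      have hα1 : α + 1 < N := by
        rcases Nat.lt_or_ge (α+1) N with h | h
        · exact h
        · exfalso
          have hEq : α + 1 = N := by omega
          have : (α + 1) % n = 0 := by rw [hEq, hN]; exact Nat.mul_mod_right n _
          omega
      rw [torusVtx_eval n m p k hn hm (α+1) β hα1 hβM, ed, em]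
    · -- crossing into the next square (subcases B, C)
      have hieq : α % n + 1 = n := by omega
      obtain ⟨ed, em⟩ := succ_divmod_eq α n hn hieq
      rcases Nat.lt_or_ge (α+1) N with hα1 | hα1
      · -- subcase B
        have hmulsucc : α + 1 = n * (α/n + 1) := by
          have hx := Nat.div_add_mod α n
          rw [Nat.mul_succ]
          omega
        have hrlt : α/n + 1 < 2^k := by
          have hmul : n * (α/n + 1) < n * 2^k := by omega
          exact Nat.lt_of_mul_lt_mul_left hmul
        have hcompat := levelNet_compat_h n m p k (α/n) (β/m) (β%m) (by omega) (by omega)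
        rw [torusVtx_eval n m p k hn hm (α+1) β hα1 hβM, ed, em, ← hcompat, hieq]
      · -- subcase C: wrap-around
        have hαtop : α + 1 = N := by omega
        have h2k1 : 1 ≤ 2^k := Nat.one_le_two_pow
        have hexpand : n * (2^k - 1) + n = n * 2^k := by
          rw [← Nat.mul_succ]
          congr 1
          omega
        have hαtop' : α + 1 = n * 2^k := by rw [← hN]; exact hαtop
        have hαval : α = n * (2^k - 1) + (n - 1) := by omega
        have hrtop : α / n = 2^k - 1 := by
          rw [hαval, Nat.mul_add_div (by omega), Nat.div_eq_of_lt (by omega), Nat.add_zero]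
        have hwrapk := levelNet_wrap_h n m p hwrap k (β/m) (β%m) (by omega)
        have hmodN : (α + 1) % N = 0 := by rw [hαtop]; exact Nat.mod_self N
        rw [torusVtx_mod n m p k (α+1) β, hmodN,
          torusVtx_eval n m p k hn hm 0 (β % M) (by omega) (Nat.mod_lt _ (by omega)),
          Nat.mod_mod_of_dvd b dvd_rfl, ← hβ, Nat.zero_div, Nat.zero_mod, ← hwrapk, hrtop, hieq]
  rw [hVa, hVa1]
  intro heq
  have hdiff := levelNet_diff_i n m p k (α/n) (β/m) (α%n) (β%m) (by omega) (by omega)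
  rw [heq, sub_self] at hdiff
  have hGnz' := hGnz (α/n) (β/m) (α%n) (β%m) hrα hsβ (by omega) (by omega)
  have h2k0 : (((2:ℝ)^k)⁻¹) ≠ 0 := by positivity
  exact hGnz' (by
    have := hdiff.symm
    rwa [smul_eq_zero, or_iff_right h2k0] at this)

end BezAux
namespace BezAux

lemma sum_shift (Nn : ℕ) (hN : 1 ≤ Nn) (f : ℕ → ℝ) :
    ∑ a ∈ Finset.range Nn, f ((a + Nn - 1) % Nn) = ∑ a ∈ Finset.range Nn, f a := by
  apply Finset.sum_nbij' (i := fun a => (a + Nn - 1) % Nn) (j := fun a => (a + 1) % Nn)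
  · intro a ha
    exact Finset.mem_range.2 (Nat.mod_lt _ (by omega))
  · intro a ha
    exact Finset.mem_range.2 (Nat.mod_lt _ (by omega))
  · intro a ha
    simp only [Finset.mem_range] at ha
    rw [Nat.mod_add_mod, show a + Nn - 1 + 1 = a + Nn by omega, Nat.add_mod_right,
      Nat.mod_eq_of_lt ha]
  · intro a ha
    simp only [Finset.mem_range] at ha
    rw [show (a+1) % Nn + Nn - 1 = (a+1) % Nn + (Nn-1) by omega, Nat.mod_add_mod,
      show a + 1 + (Nn - 1) = a + Nn by omega, Nat.add_mod_right, Nat.mod_eq_of_lt ha]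
  · intro a ha
    rfl

lemma tri_angle_sum {x y : E3} (hx : x ≠ 0) :
    angle x y + angle x (x - y) + angle y (y - x) = π := by
  by_cases hy : y = 0
  · subst hy
    rw [angle_zero_right, sub_zero, angle_self hx, zero_sub, angle_zero_left]
    ring
  · exact angle_add_angle_sub_add_angle_sub_eq_pi _ hy

lemma angle_vertex (A B C : E3) :
    angle (A - B) (C - B) = angle (B - A) ((B - A) - (C - A)) := by
  rw [sub_sub_sub_cancel_right]
  have h := angle_neg_neg (B-A) (B-C)
  rw [neg_sub, neg_sub] at h
  exact h

lemma torusVtx_transpose (n m : ℕ) (hn : 1 ≤ n) (hm : 1 ≤ m) (p : ℕ → ℕ → E3) (k a b : ℕ) :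
    torusVtx m n (fun j i => p i j) k b a = torusVtx n m p k a b := by
  have hN : 0 < n * 2^k := by positivity
  have hM : 0 < m * 2^k := by positivity
  rw [torusVtx_mod m n _ k b a, torusVtx_mod n m p k a b,
    torusVtx_eval m n _ k hm hn (b % (m*2^k)) (a % (n*2^k)) (Nat.mod_lt _ hM) (Nat.mod_lt _ hN),
    torusVtx_eval n m p k hn hm (a % (n*2^k)) (b % (m*2^k)) (Nat.mod_lt _ hN) (Nat.mod_lt _ hM)]
  exact levelNet_transpose n m p k _ _ _ _

lemma edgeV_master (n m : ℕ) (hn : 1 ≤ n) (hm : 1 ≤ m) (p : ℕ → ℕ → E3)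
    (hwrap : ∀ i ≤ n, p i 0 = p i m)
    (hV : ∀ u ∈ Set.Icc (0:ℝ) 1, ∀ v ∈ Set.Icc (0:ℝ) 1,
        bez n (m-1) (fun i j => p i (j+1) - p i j) u v ≠ 0) :
    ∃ K : ℕ, ∀ k ≥ K, ∀ a b : ℕ,
      torusVtx n m p k a (b+1) ≠ torusVtx n m p k a b := by
  obtain ⟨K, hK⟩ := edgeH_master m n hm hn (fun j i => p i j) hwrap
    (fun u hu v hv => by
      rw [show (fun j i => (fun j' i' => p i' j') (j+1) i - (fun j' i' => p i' j') j i)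
          = (fun j i => p i (j+1) - p i j) from rfl,
        ← bez_transpose n (m-1) (fun i j => p i (j+1) - p i j) v u]
      exact hV v hv u hu)
  refine ⟨K, fun k hk a b heq => ?_⟩
  apply hK k hk b a
  rw [torusVtx_transpose n m hn hm p k a (b+1), torusVtx_transpose n m hn hm p k a b]
  exact heq

end BezAux

open BezAux

/-- For a closed net whose Bézier surface is regular and
non-self-intersecting, there is `K` such that for all `k ≥ K` the total discrete Gaussian
curvature of the level-`k` control surface — summed over all vertices modulo the closing
identifications, with incident triangles counted on the quotient torus — vanishes (it equals
`2π` times the Euler characteristic of the torus). -/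
theorem discTotalCurv_closed_eq_zero (n m : ℕ) (hn : 1 ≤ n) (hm : 1 ≤ m)
    (p : ℕ → ℕ → E3) (hcl : ClosedNet n m p) (hreg : Regular n m p)
    (hnsi : ClosedNonSelfIntersecting n m p) :
    ∃ K : ℕ, ∀ k ≥ K,
      ∑ a ∈ Finset.range (n * 2 ^ k), ∑ b ∈ Finset.range (m * 2 ^ k),
        (2 * π - torusAngleSumAt n m p k a b) = 0 := by
  classical
  have hUne : ∀ u ∈ Set.Icc (0:ℝ) 1, ∀ v ∈ Set.Icc (0:ℝ) 1,
      bez (n-1) m (fun i j => p (i+1) j - p i j) u v ≠ 0 := by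
    intro u hu v hv h0
    have hli := hreg u hu v hv
    have hbu : bezU n m p u v ≠ 0 := by
      have h := hli.ne_zero 0
      simpa using h
    apply hbu
    rw [bezU_eq n m hn p u v, h0, smul_zero]
  have hVne : ∀ u ∈ Set.Icc (0:ℝ) 1, ∀ v ∈ Set.Icc (0:ℝ) 1,
      bez n (m-1) (fun i j => p i (j+1) - p i j) u v ≠ 0 := by
    intro u hu v hv h0
    have hli := hreg u hu v hv
    have hbv : bezV n m p u v ≠ 0 := by
      have h := hli.ne_zero 1
      simpa using h
    apply hbv
    rw [bezV_eq n m hm p u v, h0, smul_zero]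
  obtain ⟨K1, hK1⟩ := edgeH_master n m hn hm p hcl.2 hUne
  obtain ⟨K2, hK2⟩ := edgeV_master n m hn hm p hcl.1 hVne
  refine ⟨max K1 K2, fun k hk => ?_⟩
  have hH := hK1 k (le_trans (le_max_left _ _) hk)
  have hVv := hK2 k (le_trans (le_max_right _ _) hk)
  set N := n * 2^k with hN
  set M := m * 2^k with hM
  have hN1 : 1 ≤ N := by
    rw [hN]
    calc 1 = 1*1 := rfl
    _ ≤ n * 2^k := Nat.mul_le_mul hn Nat.one_le_two_pow
  have hM1 : 1 ≤ M := by
    rw [hM]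
    calc 1 = 1*1 := rfl
    _ ≤ m * 2^k := Nat.mul_le_mul hm Nat.one_le_two_pow
  set V : ℕ → ℕ → E3 := torusVtx n m p k with hV
  set x : ℕ → ℕ → E3 := fun a b => V (a+1) b - V a b with hx
  set y : ℕ → ℕ → E3 := fun a b => V (a+1) (b+1) - V a b with hy
  set x' : ℕ → ℕ → E3 := fun a b => V a (b+1) - V a b with hx'
  have hxne : ∀ a b, x a b ≠ 0 := fun a b => sub_ne_zero_of_ne (hH a b)
  have hx'ne : ∀ a b, x' a b ≠ 0 := fun a b => sub_ne_zero_of_ne (hVv a b)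
  have hidx : ∀ a a' b b', a % N = a' % N → b % M = b' % M → V a b = V a' b' := by
    intro a a' b b' h1 h2
    have h3 := torusVtx_mod n m p k a b
    have h4 := torusVtx_mod n m p k a' b'
    simp only [← hV, ← hN, ← hM] at h3 h4
    rw [h3, h4, h1, h2]
  have i1 : ∀ a : ℕ, ((a + N - 1) % N + 1) % N = a % N := by
    intro a
    rw [Nat.mod_add_mod, show a + N - 1 + 1 = a + N by omega, Nat.add_mod_right]
  have i2 : ∀ a : ℕ, (a + N - 1) % N % N = (a + N - 1) % N :=
    fun a => Nat.mod_mod_of_dvd _ dvd_rfl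
  have j1 : ∀ b : ℕ, ((b + M - 1) % M + 1) % M = b % M := by
    intro b
    rw [Nat.mod_add_mod, show b + M - 1 + 1 = b + M by omega, Nat.add_mod_right]
  have j2 : ∀ b : ℕ, (b + M - 1) % M % M = (b + M - 1) % M :=
    fun b => Nat.mod_mod_of_dvd _ dvd_rfl
  have eA1 : ∀ a c : ℕ, V ((a + N - 1) % N + 1) c = V a c :=
    fun a c => hidx _ _ _ _ (i1 a) rfl
  have eA2 : ∀ a c : ℕ, V ((a + N - 1) % N) c = V (a + N - 1) c :=
    fun a c => hidx _ _ _ _ (i2 a) rfl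
  have eB1 : ∀ c b : ℕ, V c ((b + M - 1) % M + 1) = V c b :=
    fun c b => hidx _ _ _ _ rfl (j1 b)
  have eB2 : ∀ c b : ℕ, V c ((b + M - 1) % M) = V c (b + M - 1) :=
    fun c b => hidx _ _ _ _ rfl (j2 b)
  set G1 : ℕ → ℕ → ℝ := fun a b => angle (x a b) (y a b) + angle (x' a b) (y a b) with hG1
  set G2 : ℕ → ℕ → ℝ := fun a b => angle (x a b) (x a b - y a b) with hG2
  set G3 : ℕ → ℕ → ℝ :=
    fun a b => angle (y a b) (y a b - x a b) + angle (y a b) (y a b - x' a b) with hG3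
  set G4 : ℕ → ℕ → ℝ := fun a b => angle (x' a b) (x' a b - y a b) with hG4
  have main : ∀ a b : ℕ, torusAngleSumAt n m p k a b
      = G1 a b + G2 ((a + N - 1) % N) b + G3 ((a + N - 1) % N) ((b + M - 1) % M)
        + G4 a ((b + M - 1) % M) := by
    intro a b
    simp only [hG1, hG2, hG3, hG4, hx, hy, hx', torusAngleSumAt]
    simp only [← hV, ← hN, ← hM]
    simp only [eA1, eA2, eB1, eB2]
    rw [← angle_vertex (V (a+N-1) b) (V a b) (V a (b+1)),
      ← angle_vertex (V (a+N-1) (b+M-1)) (V a b) (V a (b+M-1)),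
      ← angle_vertex (V (a+N-1) (b+M-1)) (V a b) (V (a+N-1) b),
      ← angle_vertex (V a (b+M-1)) (V a b) (V (a+1) b)]
    ring
  have pointw : ∀ a b : ℕ, G1 a b + G2 a b + G3 a b + G4 a b = 2 * π := by
    intro a b
    have h1 := tri_angle_sum (hxne a b) (y := y a b)
    have h2 := tri_angle_sum (hx'ne a b) (y := y a b)
    simp only [hG1, hG2, hG3, hG4]
    linarith [h1, h2]
  have s2 : ∑ a ∈ Finset.range N, ∑ b ∈ Finset.range M, G2 ((a + N - 1) % N) b
      = ∑ a ∈ Finset.range N, ∑ b ∈ Finset.range M, G2 a b :=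
    sum_shift N hN1 (fun a' => ∑ b ∈ Finset.range M, G2 a' b)
  have s4 : ∑ a ∈ Finset.range N, ∑ b ∈ Finset.range M, G4 a ((b + M - 1) % M)
      = ∑ a ∈ Finset.range N, ∑ b ∈ Finset.range M, G4 a b :=
    Finset.sum_congr rfl fun a _ => sum_shift M hM1 (G4 a)
  have s3 : ∑ a ∈ Finset.range N, ∑ b ∈ Finset.range M, G3 ((a + N - 1) % N) ((b + M - 1) % M)
      = ∑ a ∈ Finset.range N, ∑ b ∈ Finset.range M, G3 a b := by
    calc ∑ a ∈ Finset.range N, ∑ b ∈ Finset.range M, G3 ((a + N - 1) % N) ((b + M - 1) % M)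
        = ∑ a ∈ Finset.range N, ∑ b ∈ Finset.range M, G3 ((a + N - 1) % N) b :=
          Finset.sum_congr rfl fun a _ => sum_shift M hM1 (G3 ((a + N - 1) % N))
      _ = ∑ a ∈ Finset.range N, ∑ b ∈ Finset.range M, G3 a b :=
          sum_shift N hN1 (fun a' => ∑ b ∈ Finset.range M, G3 a' b)
  have hsum : ∑ a ∈ Finset.range N, ∑ b ∈ Finset.range M, torusAngleSumAt n m p k a b
      = ∑ a ∈ Finset.range N, ∑ b ∈ Finset.range M, (2 * π) := by
    calc ∑ a ∈ Finset.range N, ∑ b ∈ Finset.range M, torusAngleSumAt n m p k a b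
        = ∑ a ∈ Finset.range N, ∑ b ∈ Finset.range M,
            (G1 a b + G2 ((a + N - 1) % N) b + G3 ((a + N - 1) % N) ((b + M - 1) % M)
              + G4 a ((b + M - 1) % M)) :=
          Finset.sum_congr rfl fun a _ => Finset.sum_congr rfl fun b _ => main a b
      _ = (∑ a ∈ Finset.range N, ∑ b ∈ Finset.range M, G1 a b)
          + (∑ a ∈ Finset.range N, ∑ b ∈ Finset.range M, G2 ((a + N - 1) % N) b)
          + (∑ a ∈ Finset.range N, ∑ b ∈ Finset.range M, G3 ((a + N - 1) % N) ((b + M - 1) % M))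
          + (∑ a ∈ Finset.range N, ∑ b ∈ Finset.range M, G4 a ((b + M - 1) % M)) := by
          simp only [Finset.sum_add_distrib]
      _ = (∑ a ∈ Finset.range N, ∑ b ∈ Finset.range M, G1 a b)
          + (∑ a ∈ Finset.range N, ∑ b ∈ Finset.range M, G2 a b)
          + (∑ a ∈ Finset.range N, ∑ b ∈ Finset.range M, G3 a b)
          + (∑ a ∈ Finset.range N, ∑ b ∈ Finset.range M, G4 a b) := by
          rw [s2, s3, s4]
      _ = ∑ a ∈ Finset.range N, ∑ b ∈ Finset.range M, (G1 a b + G2 a b + G3 a b + G4 a b) := by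
          simp only [Finset.sum_add_distrib]
      _ = ∑ a ∈ Finset.range N, ∑ b ∈ Finset.range M, (2 * π) :=
          Finset.sum_congr rfl fun a _ => Finset.sum_congr rfl fun b _ => pointw a b
  have hsplit : ∑ a ∈ Finset.range N, ∑ b ∈ Finset.range M, (2 * π - torusAngleSumAt n m p k a b)
      = (∑ a ∈ Finset.range N, ∑ b ∈ Finset.range M, (2 * π))
        - ∑ a ∈ Finset.range N, ∑ b ∈ Finset.range M, torusAngleSumAt n m p k a b := by
    simp only [Finset.sum_sub_distrib]
  rw [hsplit, hsum, sub_self]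
end
end
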